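/- arXiv:1602.07090 — 5 statements merged into one kernel-verified Lean document; each statement's English description precedes it below -/
import Mathlib

section
/- If a Banach space X is octahedral, then for every finite-dimensional subspace E of X, every x₁*,...,xₙ* ∈ B_{X*}, every ε > 0 and 0 < ε₀ < ε, there exists y ∈ S_X such that whenever |γᵢ| ≤ 1 + ε₀ there exist yᵢ* ∈ X* with ‖yᵢ*‖ ≤ 1 + ε, yᵢ*|_E = xᵢ*|_E and yᵢ*(y) = γᵢ for all i. -/
open Filter Topology

noncomputable section

/-- A Banach space is octahedral (OH). -/
def IsOctahedral (Z : Type*) [NormedAddCommGroup Z] : Prop :=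
  ∀ (n : ℕ) (z : Fin n → Z), (∀ i, ‖z i‖ = 1) → ∀ ε : ℝ, 0 < ε →
    ∃ w : Z, ‖w‖ = 1 ∧ ∀ i, ‖z i + w‖ > 2 - ε

/-- Locally octahedral (LOH). -/
def IsLocallyOctahedral (Z : Type*) [NormedAddCommGroup Z] : Prop :=
  ∀ z : Z, ‖z‖ = 1 → ∀ ε : ℝ, 0 < ε →
    ∃ w : Z, ‖w‖ = 1 ∧ ‖z + w‖ > 2 - ε ∧ ‖z - w‖ > 2 - ε

/-- Weakly octahedral (WOH). -/
def IsWeaklyOctahedral (X : Type*) [NormedAddCommGroup X] [NormedSpace ℝ X] : Prop :=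
  ∀ (n : ℕ) (z : Fin n → X), (∀ i, ‖z i‖ = 1) → ∀ f : X →L[ℝ] ℝ, ‖f‖ ≤ 1 →
    ∀ ε : ℝ, 0 < ε → ∃ y : X, ‖y‖ = 1 ∧ ∀ i, ∀ t : ℝ, 0 < t →
      ‖z i + t • y‖ ≥ (1 - ε) * (|f (z i)| + t) ∧
      ‖z i - t • y‖ ≥ (1 - ε) * (|f (z i)| + t)

/-- Almost square (ASQ), sequential formulation. -/
def IsASQ (Z : Type*) [NormedAddCommGroup Z] : Prop :=
  ∀ (n : ℕ) (z : Fin n → Z), (∀ i, ‖z i‖ = 1) →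
    ∃ w : ℕ → Z, (∀ k, ‖w k‖ ≤ 1) ∧
      Tendsto (fun k => ‖w k‖) atTop (nhds 1) ∧
      ∀ i, Tendsto (fun k => ‖z i + w k‖) atTop (nhds 1) ∧
           Tendsto (fun k => ‖z i - w k‖) atTop (nhds 1)

/-- Almost square (ASQ), finite-ε formulation. -/
def IsASQeps (Z : Type*) [NormedAddCommGroup Z] : Prop :=
  ∀ (n : ℕ) (z : Fin n → Z), (∀ i, ‖z i‖ = 1) → ∀ ε : ℝ, 0 < ε →
    ∃ w : Z, ‖w‖ = 1 ∧ ∀ i, ‖z i + w‖ ≤ 1 + ε ∧ ‖z i - w‖ ≤ 1 + ε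

/-- Locally almost square (LASQ), sequential formulation. -/
def IsLASQ (Z : Type*) [NormedAddCommGroup Z] : Prop :=
  ∀ z : Z, ‖z‖ = 1 →
    ∃ w : ℕ → Z, (∀ k, ‖w k‖ ≤ 1) ∧
      Tendsto (fun k => ‖w k‖) atTop (nhds 1) ∧
      Tendsto (fun k => ‖z + w k‖) atTop (nhds 1) ∧
      Tendsto (fun k => ‖z - w k‖) atTop (nhds 1)

/-- Locally almost square (LASQ), ε formulation. -/
def IsLASQeps (Z : Type*) [NormedAddCommGroup Z] : Prop :=
  ∀ z : Z, ‖z‖ = 1 → ∀ ε : ℝ, 0 < ε →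
    ∃ w : Z, ‖w‖ = 1 ∧ ‖z + w‖ ≤ 1 + ε ∧ ‖z - w‖ ≤ 1 + ε

/-- Weakly almost square (WASQ). -/
def IsWASQ (Z : Type*) [NormedAddCommGroup Z] [NormedSpace ℝ Z] : Prop :=
  ∀ z : Z, ‖z‖ = 1 →
    ∃ w : ℕ → Z, (∀ k, ‖w k‖ ≤ 1) ∧
      Tendsto (fun k => ‖w k‖) atTop (nhds 1) ∧
      Tendsto (fun k => ‖z + w k‖) atTop (nhds 1) ∧
      Tendsto (fun k => ‖z - w k‖) atTop (nhds 1) ∧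
      ∀ f : Z →L[ℝ] ℝ, Tendsto (fun k => f (w k)) atTop (nhds 0)

/-- Local diameter two property: every slice of the unit ball has diameter two. -/
def HasLD2P (Z : Type*) [NormedAddCommGroup Z] [NormedSpace ℝ Z] : Prop :=
  ∀ f : Z →L[ℝ] ℝ, ‖f‖ = 1 → ∀ α : ℝ, 0 < α →
    Metric.diam {x : Z | ‖x‖ ≤ 1 ∧ 1 - α < f x} = 2

/-- Diameter two property: every nonempty relatively weakly open subset of the unit
ball has diameter two. -/
def HasD2P (Z : Type*) [NormedAddCommGroup Z] [NormedSpace ℝ Z] : Prop :=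
  ∀ U : Set Z, U.Nonempty → (∀ x ∈ U, ‖x‖ ≤ 1) →
    (∀ x ∈ U, ∃ (n : ℕ) (f : Fin n → Z →L[ℝ] ℝ) (δ : ℝ), 0 < δ ∧
      {y : Z | ‖y‖ ≤ 1 ∧ ∀ i, |f i y - f i x| < δ} ⊆ U) →
    Metric.diam U = 2

/-- The Schur property. -/
def HasSchurProperty (Z : Type*) [SeminormedAddCommGroup Z] [NormedSpace ℝ Z] : Prop :=
  ∀ (u : ℕ → Z) (x : Z),
    (∀ f : Z →L[ℝ] ℝ, Tendsto (fun k => f (u k)) atTop (nhds (f x))) →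
    Tendsto (fun k => ‖u k - x‖) atTop (nhds 0)

/-- The Dunford–Pettis property: every weakly compact operator is
weak-to-norm sequentially continuous. -/
def HasDPP (X : Type*) [NormedAddCommGroup X] [NormedSpace ℝ X] : Prop :=
  ∀ (Y : Type) (_ : NormedAddCommGroup Y) (_ : NormedSpace ℝ Y) (_ : CompleteSpace Y)
    (T : X →L[ℝ] Y),
    (∃ K : Set (WeakSpace ℝ Y), IsCompact K ∧
      ∀ x : X, ‖x‖ ≤ 1 → toWeakSpace ℝ Y (T x) ∈ K) →
    ∀ (u : ℕ → X) (x : X),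
      (∀ f : X →L[ℝ] ℝ, Tendsto (fun k => f (u k)) atTop (nhds (f x))) →
      Tendsto (fun k => ‖T (u k) - T x‖) atTop (nhds 0)

/-- `Z`, together with the bilinear-type map `t`, is (a realization of) the injective
tensor product `X ⊗̂_ε Y`: the span of elementary tensors is dense and the norm of any
linear combination of elementary tensors is given by the injective tensor norm. -/
def IsInjTensorProduct (X Y Z : Type*) [NormedAddCommGroup X] [NormedSpace ℝ X]
    [NormedAddCommGroup Y] [NormedSpace ℝ Y] [NormedAddCommGroup Z] [NormedSpace ℝ Z]
    (t : X → Y → Z) : Prop :=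
  (Submodule.span ℝ (Set.range fun p : X × Y => t p.1 p.2)).topologicalClosure = ⊤ ∧
  ∀ l : List (X × Y),
    ‖(l.map fun p => t p.1 p.2).sum‖ =
      sSup {s : ℝ | ∃ (f : X →L[ℝ] ℝ) (g : Y →L[ℝ] ℝ), ‖f‖ ≤ 1 ∧ ‖g‖ ≤ 1 ∧
        s = |(l.map fun p => f p.1 * g p.2).sum|}

/-- `Z`, together with the map `t`, is (a realization of) the projective tensor product
`X ⊗̂_π Y`: the span of elementary tensors is dense and the norm of any combination of
elementary tensors is the infimum of `Σ ‖xᵢ‖‖yᵢ‖` over all representations (two formal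
combinations represent the same tensor iff they agree against all pairs of functionals). -/
def IsProjTensorProduct (X Y Z : Type*) [NormedAddCommGroup X] [NormedSpace ℝ X]
    [NormedAddCommGroup Y] [NormedSpace ℝ Y] [NormedAddCommGroup Z] [NormedSpace ℝ Z]
    (t : X → Y → Z) : Prop :=
  (Submodule.span ℝ (Set.range fun p : X × Y => t p.1 p.2)).topologicalClosure = ⊤ ∧
  ∀ l : List (X × Y),
    ‖(l.map fun p => t p.1 p.2).sum‖ =
      sInf {s : ℝ | ∃ l' : List (X × Y),
        (∀ (f : X →L[ℝ] ℝ) (g : Y →L[ℝ] ℝ),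
          (l'.map fun p => f p.1 * g p.2).sum = (l.map fun p => f p.1 * g p.2).sum) ∧
        s = (l'.map fun p => ‖p.1‖ * ‖p.2‖).sum}

/-- `Z`, together with the diagonal map `δ : x ↦ x^N`, is (a realization of) the `N`-fold
injective symmetric tensor product `⊗̂_{ε,s,N} X`. -/
def IsInjSymTensorProduct (X : Type*) [NormedAddCommGroup X] [NormedSpace ℝ X] (N : ℕ)
    (Z : Type*) [NormedAddCommGroup Z] [NormedSpace ℝ Z] (δ : X → Z) : Prop :=
  (Submodule.span ℝ (Set.range δ)).topologicalClosure = ⊤ ∧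
  ∀ l : List (ℝ × X),
    ‖(l.map fun p => p.1 • δ p.2).sum‖ =
      sSup {s : ℝ | ∃ f : X →L[ℝ] ℝ, ‖f‖ ≤ 1 ∧
        s = |(l.map fun p => p.1 * (f p.2) ^ N).sum|}

/-- `Z`, together with the diagonal map `δ : x ↦ x^N`, is (a realization of) the `N`-fold
projective symmetric tensor product `⊗̂_{π,s,N} X`. -/
def IsProjSymTensorProduct (X : Type*) [NormedAddCommGroup X] [NormedSpace ℝ X] (N : ℕ)
    (Z : Type*) [NormedAddCommGroup Z] [NormedSpace ℝ Z] (δ : X → Z) : Prop :=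
  (Submodule.span ℝ (Set.range δ)).topologicalClosure = ⊤ ∧
  ∀ l : List (ℝ × X),
    ‖(l.map fun p => p.1 • δ p.2).sum‖ =
      sInf {s : ℝ | ∃ l' : List (ℝ × X),
        (∀ f : X →L[ℝ] ℝ,
          (l'.map fun p => p.1 * (f p.2) ^ N).sum = (l.map fun p => p.1 * (f p.2) ^ N).sum) ∧
        s = (l'.map fun p => |p.1| * ‖p.2‖ ^ N).sum}

/-- An operator `T : X* → Y` is weak*-to-weakly continuous. -/
def WeakStarToWeakContinuous {X Y : Type*} [NormedAddCommGroup X] [NormedSpace ℝ X]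
    [NormedAddCommGroup Y] [NormedSpace ℝ Y] (T : (X →L[ℝ] ℝ) →L[ℝ] Y) : Prop :=
  ∀ g : Y →L[ℝ] ℝ, Continuous fun f : WeakDual ℝ X => g (T f)

/-- The elementary tensor `x ⊗ y` regarded as the operator `x* ↦ x*(x) • y` in `L(X*, Y)`. -/
def elemTensor {X Y : Type*} [NormedAddCommGroup X] [NormedSpace ℝ X]
    [NormedAddCommGroup Y] [NormedSpace ℝ Y] (x : X) (y : Y) : (X →L[ℝ] ℝ) →L[ℝ] Y :=
  (ContinuousLinearMap.apply ℝ ℝ x).smulRight y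

/-- `n(Z, u) = 1`, i.e. `D(Z,u) = {f ∈ B_{Z*} : f(u) = 1}` is a norming set for `Z`. -/
def NormOneUnitary (Z : Type*) [NormedAddCommGroup Z] [NormedSpace ℝ Z] (u : Z) : Prop :=
  ‖u‖ = 1 ∧ ∀ z : Z, ‖z‖ ≤ sSup {r : ℝ | ∃ g : Z →L[ℝ] ℝ, ‖g‖ ≤ 1 ∧ g u = 1 ∧ r = |g z|}

/-- Asplund space: every closed separable subspace has separable dual. -/
def IsAsplund (Y : Type*) [NormedAddCommGroup Y] [NormedSpace ℝ Y] : Prop :=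
  ∀ S : Submodule ℝ Y, IsClosed (S : Set Y) → TopologicalSpace.SeparableSpace S →
    TopologicalSpace.SeparableSpace ((↥S) →L[ℝ] ℝ)

/-- The (metric) approximation-type property: finite-rank operators approximate the
identity uniformly on compact sets. -/
def HasAP (E : Type*) [NormedAddCommGroup E] [NormedSpace ℝ E] : Prop :=
  ∀ K : Set E, IsCompact K → ∀ ε : ℝ, 0 < ε →
    ∃ T : E →L[ℝ] E, FiniteDimensional ℝ (LinearMap.range (T : E →ₗ[ℝ] E)) ∧
      ∀ x ∈ K, ‖T x - x‖ ≤ ε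

end

/-!
Octahedrality, applied to a finite net of the unit sphere of `E`, yields a unit vector `y` with
`‖u + y‖ ≈ 2` for all unit vectors `u ∈ E`. Then `E ⊕ ℝy` is almost an `ℓ₁`-sum:
`c (‖e‖ + |s|) ≤ ‖e + s y‖` with `c = (1 + ε₀) / (1 + ε)`. Hence `e + s y ↦ xᵢ*(e) + s γᵢ`
has norm at most `1 + ε` on `E ⊕ ℝy`, and Hahn–Banach extends it to `X`.
-/

lemma IsOctahedral.exists_forall_norm_add_gt_of_isCompact {X : Type*} [NormedAddCommGroup X]
    (hX : IsOctahedral X) {K : Set X} (hK : IsCompact K) (hK1 : ∀ u ∈ K, ‖u‖ = 1)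
    {η : ℝ} (hη : 0 < η) :
    ∃ y : X, ‖y‖ = 1 ∧ ∀ u ∈ K, 2 - η < ‖u + y‖ := by
  obtain ⟨t, htK, htfin, hKt⟩ := hK.finite_cover_balls (half_pos hη)
  obtain ⟨n, z, -, rfl⟩ := htfin.fin_param
  obtain ⟨y, hy1, hzy⟩ := hX n z (fun i => hK1 _ (htK ⟨i, rfl⟩)) (η / 2) (half_pos hη)
  refine ⟨y, hy1, fun u hu => ?_⟩
  obtain ⟨_, ⟨i, rfl⟩, hui⟩ := Set.mem_iUnion₂.mp (hKt hu)
  have hzu : ‖z i - u‖ < η / 2 := by rw [← dist_eq_norm, dist_comm]; exact hui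
  have hzy_le : ‖z i + y‖ ≤ ‖u + y‖ + ‖z i - u‖ := by
    simpa using norm_le_norm_add_norm_sub' (z i + y) (u + y)
  linarith [hzy i]

lemma le_norm_smul_add_smul_of_norm_eq_one {X : Type*} [SeminormedAddCommGroup X]
    [NormedSpace ℝ X] {v y : X} (hv : ‖v‖ = 1) (hy : ‖y‖ = 1) {a : ℝ} (ha : 0 ≤ a) (b : ℝ) :
    a + b - max a b * (2 - ‖v + y‖) ≤ ‖a • v + b • y‖ := by
  set m := max a b
  have hma : 0 ≤ m - a := sub_nonneg.2 (le_max_left a b)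
  have hmb : 0 ≤ m - b := sub_nonneg.2 (le_max_right a b)
  have hdecomp : m • (v + y) = (a • v + b • y) + ((m - a) • v + (m - b) • y) := by module
  have : m * ‖v + y‖ ≤ ‖a • v + b • y‖ + ((m - a) + (m - b)) := calc
    m * ‖v + y‖ = ‖m • (v + y)‖ := by
      rw [norm_smul, Real.norm_of_nonneg (ha.trans (le_max_left a b))]
    _ ≤ ‖a • v + b • y‖ + (‖(m - a) • v‖ + ‖(m - b) • y‖) := by
      rw [hdecomp]; exact (norm_add_le _ _).trans (by gcongr; exact norm_add_le _ _)
    _ = ‖a • v + b • y‖ + ((m - a) + (m - b)) := by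
      rw [norm_smul, norm_smul, hv, hy, Real.norm_of_nonneg hma, Real.norm_of_nonneg hmb,
        mul_one, mul_one]
  linarith

lemma IsOctahedral.exists_mul_norm_add_abs_le_norm_add_smul {X : Type*} [NormedAddCommGroup X]
    [NormedSpace ℝ X] (hX : IsOctahedral X) (E : Submodule ℝ X) [FiniteDimensional ℝ E]
    {c : ℝ} (hc : c < 1) :
    ∃ y : X, ‖y‖ = 1 ∧ ∀ u ∈ E, ∀ s : ℝ, c * (‖u‖ + |s|) ≤ ‖u + s • y‖ := by
  obtain ⟨y, hy1, hy⟩ := hX.exists_forall_norm_add_gt_of_isCompact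
    ((isCompact_sphere (0 : E) 1).image continuous_subtype_val)
    (by rintro _ ⟨u, hu, rfl⟩; simpa using hu) (sub_pos.2 hc)
  refine ⟨y, hy1, fun u hu s => ?_⟩
  wlog hs : 0 ≤ s generalizing u s
  · have := this (-u) (E.neg_mem hu) (-s) (by linarith)
    rwa [norm_neg, abs_neg, neg_smul, ← neg_add, norm_neg] at this
  rw [abs_of_nonneg hs]
  rcases eq_or_ne u 0 with rfl | hu0
  · rw [norm_zero, zero_add, zero_add, norm_smul, hy1, Real.norm_of_nonneg hs, mul_one]
    nlinarith
  set a := ‖u‖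
  have ha : 0 < a := norm_pos_iff.2 hu0
  have hv : ‖a⁻¹ • u‖ = 1 := norm_smul_inv_norm hu0
  have hvy : 1 + c < ‖a⁻¹ • u + y‖ := by
    have := hy _ ⟨⟨_, E.smul_mem a⁻¹ hu⟩, by simpa using hv, rfl⟩
    linarith
  -- `‖a v + s y‖ ≥ a + s - max a s * (1 - c) ≥ c (a + s)` for the unit vector `v = a⁻¹ u`
  have hle := le_norm_smul_add_smul_of_norm_eq_one hv hy1 ha.le s
  rw [smul_inv_smul₀ ha.ne'] at hle
  have hmax : max a s ≤ a + s := max_le (by linarith) (by linarith)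
  nlinarith [le_max_left a s]

lemma Submodule.exists_dual_eq_zero_of_notMem {X : Type*} [NormedAddCommGroup X]
    [NormedSpace ℝ X] (E : Submodule ℝ X) (hE : IsClosed (E : Set X)) {y : X} (hy : y ∉ E) :
    ∃ h : X →L[ℝ] ℝ, (∀ e ∈ E, h e = 0) ∧ h y = 1 := by
  obtain ⟨f, u, hfE, hfy⟩ := geometric_hahn_banach_closed_point E.convex hE hy
  have hE0 : ∀ e ∈ E, f e = 0 := by
    intro e he
    by_contra hfe
    have := hfE (((|u| + 1) / f e) • e) (E.smul_mem _ he)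
    rw [map_smul, smul_eq_mul, div_mul_cancel₀ _ hfe] at this
    linarith [le_abs_self u]
  have hfy0 : f y ≠ 0 := by linarith [hfE 0 E.zero_mem, map_zero f]
  exact ⟨(f y)⁻¹ • f, fun e he => by simp [hE0 e he], by simp [hfy0]⟩

lemma ContinuousLinearMap.exists_extension_norm_le_of_abs_le {X : Type*} [NormedAddCommGroup X]
    [NormedSpace ℝ X] (F : Submodule ℝ X) (G : X →L[ℝ] ℝ) {C : ℝ} (hC : 0 ≤ C)
    (hG : ∀ v ∈ F, |G v| ≤ C * ‖v‖) :
    ∃ g : X →L[ℝ] ℝ, ‖g‖ ≤ C ∧ ∀ v ∈ F, g v = G v := by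
  obtain ⟨g, hgG, hg⟩ := exists_extension_norm_eq F (G.comp F.subtypeL)
  refine ⟨g, hg ▸ ContinuousLinearMap.opNorm_le_bound _ hC fun v => hG v v.2, fun v hv => ?_⟩
  exact hgG ⟨v, hv⟩

lemma exists_extension_apply_eq_of_abs_le {X : Type*} [NormedAddCommGroup X] [NormedSpace ℝ X]
    (E : Submodule ℝ X) (hE : IsClosed (E : Set X)) {y : X} (hy : y ∉ E) (f : X →L[ℝ] ℝ)
    (γ : ℝ) {C : ℝ} (hC : 0 ≤ C)
    (hbound : ∀ e ∈ E, ∀ s : ℝ, |f e + s * γ| ≤ C * ‖e + s • y‖) :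
    ∃ g : X →L[ℝ] ℝ, ‖g‖ ≤ C ∧ (∀ e ∈ E, g e = f e) ∧ g y = γ := by
  obtain ⟨h, hhE, hhy⟩ := E.exists_dual_eq_zero_of_notMem hE hy
  set G := f + (γ - f y) • h
  have hGE : ∀ e ∈ E, G e = f e := fun e he => by simp [G, hhE e he]
  have hGy : G y = γ := by simp [G, hhy]
  obtain ⟨g, hgC, hgG⟩ := G.exists_extension_norm_le_of_abs_le (E ⊔ Submodule.span ℝ {y}) hC
    (by
      intro v hv
      obtain ⟨e, he, _, hw, rfl⟩ := Submodule.mem_sup.mp hv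
      obtain ⟨s, rfl⟩ := Submodule.mem_span_singleton.mp hw
      rw [map_add, map_smul, hGE e he, hGy, smul_eq_mul]
      exact hbound e he s)
  refine ⟨g, hgC, fun e he => ?_, ?_⟩
  · rw [hgG e (Submodule.mem_sup_left he), hGE e he]
  · rw [hgG y (Submodule.mem_sup_right (Submodule.mem_span_singleton_self y)), hGy]

lemma abs_apply_add_mul_le {X : Type*} [SeminormedAddCommGroup X] [NormedSpace ℝ X]
    {f : X →L[ℝ] ℝ} (hf : ‖f‖ ≤ 1) {γ K : ℝ} (hγ : |γ| ≤ K) (hK : 1 ≤ K) (e : X) (s : ℝ) :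
    |f e + s * γ| ≤ K * (‖e‖ + |s|) := by
  have hfe : |f e| ≤ ‖e‖ := by
    simpa using (f.le_opNorm e).trans (mul_le_of_le_one_left (norm_nonneg e) hf)
  have hsγ : |s * γ| ≤ |s| * K := by
    rw [abs_mul]; exact mul_le_mul_of_nonneg_left hγ (abs_nonneg s)
  nlinarith [abs_add_le (f e) (s * γ), norm_nonneg e, abs_nonneg s]

theorem statement0_general (X : Type*) [NormedAddCommGroup X] [NormedSpace ℝ X]
    (hX : IsOctahedral X) :
    ∀ E : Submodule ℝ X, FiniteDimensional ℝ E →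
    ∀ (n : ℕ) (x' : Fin n → X →L[ℝ] ℝ), (∀ i, ‖x' i‖ ≤ 1) →
    ∀ ε ε₀ : ℝ, 0 < ε₀ → ε₀ < ε →
    ∃ y : X, ‖y‖ = 1 ∧ ∀ γ : Fin n → ℝ, (∀ i, |γ i| ≤ 1 + ε₀) →
      ∃ y' : Fin n → X →L[ℝ] ℝ, ∀ i,
        ‖y' i‖ ≤ 1 + ε ∧ (∀ e ∈ E, y' i e = x' i e) ∧ y' i y = γ i := by
  intro E hE n x' hx' ε ε₀ hε₀ hεε
  have := hE
  set c := (1 + ε₀) / (1 + ε)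
  have hc0 : 0 < c := div_pos (by linarith) (by linarith)
  have hc1 : c < 1 := (div_lt_one (by linarith)).2 (by linarith)
  obtain ⟨y, hy1, hEy⟩ := hX.exists_mul_norm_add_abs_le_norm_add_smul E hc1
  have hyE : y ∉ E := fun hyE => by
    have := hEy (-y) (E.neg_mem hyE) 1
    simp only [norm_neg, hy1, abs_one, one_smul, neg_add_cancel, norm_zero] at this
    linarith
  refine ⟨y, hy1, fun γ hγ => ?_⟩
  choose y' hy' using fun i => exists_extension_apply_eq_of_abs_le E
    E.closed_of_finiteDimensional hyE (x' i) (γ i) (by linarith) fun e he s => calc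
      |x' i e + s * γ i| ≤ (1 + ε₀) * (‖e‖ + |s|) :=
        abs_apply_add_mul_le (hx' i) (hγ i) (by linarith) e s
      _ = (1 + ε) * (c * (‖e‖ + |s|)) := by
        rw [← mul_assoc, mul_div_cancel₀ _ (by linarith)]
      _ ≤ (1 + ε) * ‖e + s • y‖ := mul_le_mul_of_nonneg_left (hEy e he s) (by linarith)
  exact ⟨y', hy'⟩

theorem statement0 (X : Type*) [NormedAddCommGroup X] [NormedSpace ℝ X] [CompleteSpace X]
    (hX : IsOctahedral X) :
    ∀ E : Submodule ℝ X, FiniteDimensional ℝ E →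
    ∀ (n : ℕ) (x' : Fin n → X →L[ℝ] ℝ), (∀ i, ‖x' i‖ ≤ 1) →
    ∀ ε ε₀ : ℝ, 0 < ε₀ → ε₀ < ε →
    ∃ y : X, ‖y‖ = 1 ∧ ∀ γ : Fin n → ℝ, (∀ i, |γ i| ≤ 1 + ε₀) →
      ∃ y' : Fin n → X →L[ℝ] ℝ, ∀ i,
        ‖y' i‖ ≤ 1 + ε ∧ (∀ e ∈ E, y' i e = x' i e) ∧ y' i y = γ i :=
  statement0_general X hX
end

section
/- Let X and Y be Banach spaces and let H ⊆ L(X*, Y) be a closed subspace containing all finite-rank operators x ⊗ y (x ∈ X, y ∈ Y, acting as x* ↦ x*(x)·y), such that every T ∈ H is weak*-to-weakly continuous. If both X and Y are octahedral, then H is octahedral. -/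
open Filter Topology

/-!
Given unit operators `Tᵢ ∈ H`, weak*-to-weak continuity lets us pick `gᵢ ∈ B_{Y*}` and
`xᵢ ∈ B_X` with `gᵢ ∘ Tᵢ` equal to evaluation at `xᵢ` and `‖xᵢ‖ ≈ 1`. Octahedrality of `X` gives a
unit `x` with `‖xᵢ + x‖ ≈ 2`; a functional `fᵢ` norming `xᵢ + x` then nearly norms both `xᵢ` and
`x`, so `‖Tᵢ fᵢ‖ ≥ gᵢ (Tᵢ fᵢ) = fᵢ xᵢ ≈ 1` and `fᵢ x ≈ 1`. Octahedrality of `Y` gives a unit `y`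
with `‖Tᵢ fᵢ + y‖ ≈ 2`, and `(Tᵢ + x ⊗ y) fᵢ = Tᵢ fᵢ + (fᵢ x) • y`.
-/

open NormedSpace

theorem exists_eq_apply_of_continuous_weakDual {𝕜 E : Type*} [NontriviallyNormedField 𝕜]
    [NormedAddCommGroup E] [NormedSpace 𝕜 E] (φ : StrongDual 𝕜 (StrongDual 𝕜 E))
    (hφ : Continuous fun f : WeakDual 𝕜 E => φ f) : ∃ x : E, ∀ f, φ f = f x := by
  obtain ⟨x, hx⟩ := LinearMap.dualEmbedding_surjective (topDualPairing 𝕜 E)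
    ⟨(φ : StrongDual 𝕜 E →ₗ[𝕜] 𝕜), hφ⟩
  exact ⟨x, fun f => (DFunLike.congr_fun hx f).symm⟩

theorem norm_elemTensor {X Y : Type*} [NormedAddCommGroup X] [NormedSpace ℝ X]
    [NormedAddCommGroup Y] [NormedSpace ℝ Y] (x : X) (y : Y) :
    ‖elemTensor x y‖ = ‖x‖ * ‖y‖ := by
  rw [elemTensor, ContinuousLinearMap.norm_smulRight_apply,
    ← (inclusionInDoubleDualLi ℝ).norm_map x]
  rfl

theorem exists_norm_eq_one_norm_sub_eq {Z : Type*} [NormedAddCommGroup Z] [NormedSpace ℝ Z]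
    [Nontrivial Z] {z : Z} (hz : ‖z‖ ≤ 1) : ∃ u : Z, ‖u‖ = 1 ∧ ‖u - z‖ = 1 - ‖z‖ := by
  rcases eq_or_ne z 0 with rfl | hz0
  · obtain ⟨u, hu⟩ := exists_norm_eq Z zero_le_one
    exact ⟨u, hu, by simp [hu]⟩
  · refine ⟨‖z‖⁻¹ • z, norm_smul_inv_norm hz0, ?_⟩
    have hpos : 0 < ‖z‖ := norm_pos_iff.2 hz0
    have hcoef : 0 ≤ ‖z‖⁻¹ - 1 := sub_nonneg.2 (one_le_inv_iff₀.2 ⟨hpos, hz⟩)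
    rw [show ‖z‖⁻¹ • z - z = (‖z‖⁻¹ - 1) • z by rw [sub_smul, one_smul], norm_smul,
      Real.norm_of_nonneg hcoef, sub_mul, inv_mul_cancel₀ hpos.ne', one_mul]

theorem IsOctahedral.nontrivial {Z : Type*} [NormedAddCommGroup Z] (hZ : IsOctahedral Z) :
    Nontrivial Z := by
  obtain ⟨w, hw, -⟩ := hZ 0 finZeroElim finZeroElim 1 one_pos
  exact nontrivial_of_ne w 0 (by rintro rfl; simp at hw)

theorem IsOctahedral.exists_lt_norm_add {Z : Type*} [NormedAddCommGroup Z] [NormedSpace ℝ Z]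
    (hZ : IsOctahedral Z) {n : ℕ} (z : Fin n → Z) (hz : ∀ i, ‖z i‖ ≤ 1) {ε : ℝ} (hε : 0 < ε) :
    ∃ w : Z, ‖w‖ = 1 ∧ ∀ i, ‖z i‖ + 1 - ε < ‖z i + w‖ := by
  have := hZ.nontrivial
  choose u hu hdist using fun i => exists_norm_eq_one_norm_sub_eq (hz i)
  obtain ⟨w, hw, hoct⟩ := hZ n u hu ε hε
  refine ⟨w, hw, fun i => ?_⟩
  have htri : ‖u i + w‖ ≤ ‖z i + w‖ + ‖u i - z i‖ :=
    calc ‖u i + w‖ = ‖(z i + w) + (u i - z i)‖ := by congr 1; abel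
      _ ≤ ‖z i + w‖ + ‖u i - z i‖ := norm_add_le _ _
  linarith [hoct i, hdist i]

theorem ContinuousLinearMap.apply_le_norm_of_norm_le_one {E : Type*} [SeminormedAddCommGroup E]
    [NormedSpace ℝ E] {g : StrongDual ℝ E} (hg : ‖g‖ ≤ 1) (v : E) : g v ≤ ‖v‖ :=
  calc g v ≤ ‖g v‖ := Real.le_norm_self _
    _ ≤ ‖v‖ := g.le_of_opNorm_le_of_le hg le_rfl |>.trans_eq (one_mul _)

section OperatorsOnDual

variable {X Y : Type*} [NormedAddCommGroup X] [NormedSpace ℝ X] [NormedAddCommGroup Y]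
  [NormedSpace ℝ Y] {T : StrongDual ℝ X →L[ℝ] Y}

theorem norm_le_opNorm_of_comp_eq_apply {g : StrongDual ℝ Y} {x₀ : X} (hg : ‖g‖ ≤ 1)
    (hgT : ∀ f, g (T f) = f x₀) : ‖x₀‖ ≤ ‖T‖ :=
  norm_le_dual_bound ℝ x₀ (norm_nonneg T) fun f => by
    rw [← hgT]
    exact g.le_of_opNorm_le_of_le hg (T.le_opNorm f) |>.trans_eq (one_mul _)

theorem WeakStarToWeakContinuous.exists_dual_comp_eq_apply (hT : WeakStarToWeakContinuous T)
    {η : ℝ} (hη : 0 < η) :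
    ∃ (g : StrongDual ℝ Y) (x₀ : X), ‖g‖ ≤ 1 ∧ (∀ f, g (T f) = f x₀) ∧ ‖T‖ - η < ‖x₀‖ := by
  obtain ⟨f, hf, hTf⟩ := T.exists_lt_apply_of_lt_opNorm (sub_lt_self ‖T‖ hη)
  obtain ⟨g, hg, hgTf⟩ := exists_dual_vector'' ℝ (T f)
  obtain ⟨x₀, hx₀⟩ := exists_eq_apply_of_continuous_weakDual (g.comp T) (hT g)
  refine ⟨g, x₀, hg, hx₀, ?_⟩
  calc ‖T‖ - η < ‖T f‖ := hTf
    _ = f x₀ := hgTf.symm.trans (hx₀ f)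
    _ ≤ ‖x₀‖ := f.apply_le_norm_of_norm_le_one hf.le x₀

theorem norm_apply_add_sub_le_norm_add_elemTensor (T : StrongDual ℝ X →L[ℝ] Y)
    {f : StrongDual ℝ X} {x : X} {y : Y} (hf : ‖f‖ ≤ 1) (hx : ‖x‖ ≤ 1) (hy : ‖y‖ ≤ 1) :
    ‖T f + y‖ - (1 - f x) ≤ ‖T + elemTensor x y‖ := by
  have hfx : 0 ≤ 1 - f x := sub_nonneg.2 ((f.apply_le_norm_of_norm_le_one hf x).trans hx)
  have hsplit : T f + y = (T + elemTensor x y) f + (1 - f x) • y := by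
    simp only [add_apply, elemTensor, ContinuousLinearMap.smulRight_apply,
      ContinuousLinearMap.apply_apply, sub_smul, one_smul]
    abel
  have hsmul : ‖(1 - f x) • y‖ ≤ 1 - f x := by
    rw [norm_smul, Real.norm_of_nonneg hfx]
    exact mul_le_of_le_one_right hfx hy
  have := (T + elemTensor x y).unit_le_opNorm f hf
  linarith [hsplit ▸ norm_add_le ((T + elemTensor x y) f) ((1 - f x) • y)]

end OperatorsOnDual

theorem statement1_general (X Y : Type*) [NormedAddCommGroup X] [NormedSpace ℝ X]
    [NormedAddCommGroup Y] [NormedSpace ℝ Y]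
    (H : Submodule ℝ ((X →L[ℝ] ℝ) →L[ℝ] Y))
    (htens : ∀ (x : X) (y : Y), elemTensor x y ∈ H)
    (hwstar : ∀ T ∈ H, WeakStarToWeakContinuous T)
    (hX : IsOctahedral X) (hY : IsOctahedral Y) :
    @IsOctahedral ↥H (@Submodule.normedAddCommGroup ℝ ((X →L[ℝ] ℝ) →L[ℝ] Y) _ _ _ H) := by
  intro n T hT ε hε
  have hε3 : 0 < ε / 3 := by positivity
  have hT' : ∀ i, ‖(T i : StrongDual ℝ X →L[ℝ] Y)‖ = 1 := hT
  choose g x₀ hg hgT hx₀ using fun i => (hwstar _ (T i).2).exists_dual_comp_eq_apply hε3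
  have hx₀_le (i : Fin n) : ‖x₀ i‖ ≤ 1 :=
    hT' i ▸ norm_le_opNorm_of_comp_eq_apply (hg i) (hgT i)
  obtain ⟨x, hx, hxoct⟩ := hX.exists_lt_norm_add x₀ hx₀_le hε3
  choose f hf hfx using fun i => exists_dual_vector'' ℝ (x₀ i + x)
  have hTf_le (i : Fin n) : ‖(T i : StrongDual ℝ X →L[ℝ] Y) (f i)‖ ≤ 1 :=
    (T i).1.le_of_opNorm_le_of_le (hT' i).le (hf i) |>.trans_eq (one_mul _)
  obtain ⟨y, hy, hyoct⟩ := hY.exists_lt_norm_add _ hTf_le hε3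
  refine ⟨⟨elemTensor x y, htens x y⟩, (norm_elemTensor x y).trans (by rw [hx, hy, one_mul]),
    fun i => ?_⟩
  change 2 - ε < ‖(T i : StrongDual ℝ X →L[ℝ] Y) + elemTensor x y‖
  calc 2 - ε < ‖x₀ i + x‖ - ε / 3 := by linarith [hx₀ i, hxoct i, hT' i]
    _ = f i (x₀ i) + f i x - ε / 3 := by rw [← map_add, hfx i]; rfl
    _ ≤ ‖(T i : StrongDual ℝ X →L[ℝ] Y) (f i)‖ + f i x - ε / 3 := by
        gcongr
        exact hgT i (f i) ▸ (g i).apply_le_norm_of_norm_le_one (hg i) _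
    _ < ‖(T i : StrongDual ℝ X →L[ℝ] Y) (f i) + y‖ - (1 - f i x) := by linarith [hyoct i]
    _ ≤ ‖(T i : StrongDual ℝ X →L[ℝ] Y) + elemTensor x y‖ :=
        norm_apply_add_sub_le_norm_add_elemTensor _ (hf i) hx.le hy.le

theorem statement1 (X Y : Type*) [NormedAddCommGroup X] [NormedSpace ℝ X] [CompleteSpace X]
    [NormedAddCommGroup Y] [NormedSpace ℝ Y] [CompleteSpace Y]
    (H : Submodule ℝ ((X →L[ℝ] ℝ) →L[ℝ] Y))
    (hHclosed : IsClosed (H : Set ((X →L[ℝ] ℝ) →L[ℝ] Y)))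
    (htens : ∀ (x : X) (y : Y), elemTensor x y ∈ H)
    (hwstar : ∀ T ∈ H, WeakStarToWeakContinuous T)
    (hX : IsOctahedral X) (hY : IsOctahedral Y) :
    @IsOctahedral ↥H (@Submodule.normedAddCommGroup ℝ ((X →L[ℝ] ℝ) →L[ℝ] Y) _ _ _ H) :=
  statement1_general X Y H htens hwstar hX hY
end

section
/- If X and Y are octahedral Banach spaces, then the injective tensor product X ⊗̂_ε Y is octahedral. -/
open Filter Topology

/-!
Octahedrality of `X` gives, for every finite-dimensional `E ⊆ X` and `δ > 0`, a unit vector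
`x₀` with `‖e + c x₀‖ ≥ (1 - δ)(‖e‖ + |c|)` on `E ⊕ ℝ x₀`, so every functional of norm
`≤ 1` on `E` extends, after scaling by `1 - δ`, to a functional of norm `≤ 1` that is `1 - δ`
at `x₀`. Approximate each `uᵢ` by a finite tensor `∑ xⱼ ⊗ yⱼ`, pick such `x₀`, `y₀` for the
spans of all the `xⱼ` and of all the `yⱼ`, and test `uᵢ + x₀ ⊗ y₀` against the product of the
extended norming functionals of `uᵢ`: the injective norm gives `‖uᵢ + x₀ ⊗ y₀‖ ≈ ‖uᵢ‖ + 1 = 2`.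
-/

section Octahedral

variable {X : Type*} [NormedAddCommGroup X]

theorem IsOctahedral.exists_forall_mem_finset (hX : IsOctahedral X) (s : Finset X)
    (hs : ∀ z ∈ s, ‖z‖ = 1) {ε : ℝ} (hε : 0 < ε) :
    ∃ w : X, ‖w‖ = 1 ∧ ∀ z ∈ s, 2 - ε < ‖z + w‖ := by
  obtain ⟨w, hw, hzw⟩ :=
    hX s.card (fun i => s.equivFin.symm i) (fun i => hs _ (s.equivFin.symm i).2) ε hε
  exact ⟨w, hw, fun z hz => by simpa using hzw (s.equivFin ⟨z, hz⟩)⟩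

variable [NormedSpace ℝ X]

theorem abs_apply_le_norm {f : X →L[ℝ] ℝ} (hf : ‖f‖ ≤ 1) (x : X) : |f x| ≤ ‖x‖ := by
  simpa using f.le_of_opNorm_le hf x

def IsAlmostL1Sum (E : Submodule ℝ X) (x₀ : X) (δ : ℝ) : Prop :=
  ∀ e ∈ E, ∀ c : ℝ, (1 - δ) * (‖e‖ + |c|) ≤ ‖e + c • x₀‖

theorem le_norm_smul_add_smul {u v : X} (hu : ‖u‖ ≤ 1) (hv : ‖v‖ ≤ 1) {δ : ℝ}
    (huv : 2 - δ ≤ ‖u + v‖) {a b : ℝ} (ha : 0 ≤ a) (hb : 0 ≤ b) :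
    (1 - δ) * (a + b) ≤ ‖a • u + b • v‖ := by
  obtain ⟨f, hf, hfuv⟩ := exists_dual_vector'' ℝ (u + v)
  have hfu : f u ≤ 1 := (le_abs_self _).trans ((abs_apply_le_norm hf u).trans hu)
  have hfv : f v ≤ 1 := (le_abs_self _).trans ((abs_apply_le_norm hf v).trans hv)
  have hsum : 2 - δ ≤ f u + f v := by rw [← map_add, hfuv]; exact huv
  calc (1 - δ) * (a + b) ≤ a * f u + b * f v := by nlinarith
    _ = f (a • u + b • v) := by simp
    _ ≤ ‖a • u + b • v‖ := (le_abs_self _).trans (abs_apply_le_norm hf _)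

theorem isAlmostL1Sum_of_forall_norm_add_ge {E : Submodule ℝ X} {x₀ : X} (hx₀ : ‖x₀‖ = 1)
    {δ : ℝ} (hδ : 0 ≤ δ) (h : ∀ u ∈ E, ‖u‖ = 1 → 2 - δ ≤ ‖u + x₀‖) :
    IsAlmostL1Sum E x₀ δ := by
  have key : ∀ e ∈ E, ∀ c : ℝ, 0 ≤ c → (1 - δ) * (‖e‖ + c) ≤ ‖e + c • x₀‖ := by
    intro e he c hc
    rcases eq_or_ne e 0 with rfl | he0
    · simp only [norm_zero, zero_add, norm_smul, hx₀, Real.norm_of_nonneg hc]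
      nlinarith
    · have hu : ‖‖e‖⁻¹ • e‖ = 1 := by simpa using norm_smul_inv_norm (𝕜 := ℝ) he0
      have := le_norm_smul_add_smul hu.le hx₀.le (h _ (E.smul_mem _ he) hu) (norm_nonneg e) hc
      rwa [smul_inv_smul₀ (norm_ne_zero_iff.2 he0)] at this
  intro e he c
  rcases le_total 0 c with hc | hc
  · simpa [abs_of_nonneg hc] using key e he c hc
  · calc (1 - δ) * (‖e‖ + |c|) = (1 - δ) * (‖-e‖ + -c) := by rw [norm_neg, abs_of_nonpos hc]
      _ ≤ ‖-e + -c • x₀‖ := key (-e) (neg_mem he) (-c) (neg_nonneg.2 hc)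
      _ = ‖e + c • x₀‖ := by rw [neg_smul, ← neg_add, norm_neg]

theorem IsOctahedral.exists_isAlmostL1Sum (hX : IsOctahedral X) (E : Submodule ℝ X)
    [FiniteDimensional ℝ E] {δ : ℝ} (hδ : 0 < δ) :
    ∃ x₀ : X, ‖x₀‖ = 1 ∧ IsAlmostL1Sum E x₀ δ := by
  have hK : IsCompact (Subtype.val '' Metric.sphere (0 : E) 1) :=
    (isCompact_sphere 0 1).image continuous_subtype_val
  obtain ⟨s, hsK, hcover⟩ :=
    hK.elim_nhds_subcover (Metric.ball · (δ / 2)) fun x _ => Metric.ball_mem_nhds x (by positivity)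
  have hs : ∀ z ∈ s, ‖z‖ = 1 := fun z hz => by
    obtain ⟨v, hv, rfl⟩ := hsK z hz
    simpa using hv
  obtain ⟨x₀, hx₀, hnet⟩ := hX.exists_forall_mem_finset s hs (half_pos hδ)
  refine ⟨x₀, hx₀, isAlmostL1Sum_of_forall_norm_add_ge hx₀ hδ.le fun u hu hu1 => ?_⟩
  obtain ⟨z, hz, huz⟩ := Set.mem_iUnion₂.1 (hcover ⟨⟨u, hu⟩, by simpa using hu1, rfl⟩)
  have hclose : ‖u - z‖ < δ / 2 := by simpa [dist_eq_norm] using huz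
  have := hnet z hz
  have := norm_le_insert' (z + x₀) (u + x₀)
  rw [show z + x₀ - (u + x₀) = -(u - z) by abel, norm_neg] at this
  linarith

theorem IsAlmostL1Sum.notMem {E : Submodule ℝ X} {x₀ : X} {δ : ℝ} (h : IsAlmostL1Sum E x₀ δ)
    (hδ : δ < 1) : x₀ ∉ E := by
  intro hx₀
  have := h (-x₀) (neg_mem hx₀) 1
  rw [one_smul, neg_add_cancel, norm_zero, norm_neg, abs_one] at this
  nlinarith [norm_nonneg x₀]

theorem IsAlmostL1Sum.exists_extension {E : Submodule ℝ X} {x₀ : X} {δ : ℝ}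
    (h : IsAlmostL1Sum E x₀ δ) (hδ : δ < 1) (f : X →L[ℝ] ℝ) (hf : ‖f‖ ≤ 1) :
    ∃ f' : X →L[ℝ] ℝ, ‖f'‖ ≤ 1 ∧ (∀ e ∈ E, f' e = (1 - δ) * f e) ∧ f' x₀ = 1 - δ := by
  have hδ' : 0 < 1 - δ := sub_pos.2 hδ
  let g : X →ₗ.[ℝ] ℝ :=
    LinearPMap.supSpanSingleton ⟨E, (f : X →ₗ[ℝ] ℝ) ∘ₗ E.subtype⟩ x₀ 1 (h.notMem hδ)
  have hg : ∀ z : g.domain, ‖g z‖ ≤ (1 - δ)⁻¹ * ‖z‖ := by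
    rintro ⟨z, hz⟩
    obtain ⟨e, he, _, hc, rfl⟩ := Submodule.mem_sup.1 hz
    obtain ⟨c, rfl⟩ := Submodule.mem_span_singleton.1 hc
    rw [LinearPMap.supSpanSingleton_apply_mk _ _ _ _ _ he, le_inv_mul_iff₀ hδ']
    calc (1 - δ) * ‖f e + c • (1 : ℝ)‖ ≤ (1 - δ) * (‖e‖ + |c|) := by
          gcongr
          rw [smul_eq_mul, mul_one, Real.norm_eq_abs]
          exact (abs_add_le _ _).trans (by linarith [abs_apply_le_norm hf e])
      _ ≤ ‖e + c • x₀‖ := h e he c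
  obtain ⟨φ, hφg, hφ⟩ := exists_extension_norm_eq g.domain (g.toFun.mkContinuous _ hg)
  have hφ1 : ‖φ‖ ≤ (1 - δ)⁻¹ := hφ ▸ LinearMap.mkContinuous_norm_le _ (by positivity) _
  refine ⟨(1 - δ) • φ, ?_, fun e he => ?_, ?_⟩
  · calc ‖(1 - δ) • φ‖ ≤ (1 - δ) * (1 - δ)⁻¹ := by
          rw [norm_smul, Real.norm_of_nonneg hδ'.le]; gcongr
      _ = 1 := mul_inv_cancel₀ hδ'.ne'
  · have hφe : φ e = f e := (hφg ⟨e, Submodule.mem_sup_left he⟩).trans <|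
      LinearPMap.supSpanSingleton_apply_mk_of_mem
        (f := ⟨E, (f : X →ₗ[ℝ] ℝ) ∘ₗ E.subtype⟩) _ _ he
    simp [hφe]
  · have hφx₀ : φ x₀ = 1 := (hφg ⟨x₀, _⟩).trans (LinearPMap.supSpanSingleton_apply_self _ _ _)
    simp [hφx₀]

end Octahedral

theorem abs_sum_map_mul_le_sum_norm_mul {X Y : Type*} [NormedAddCommGroup X] [NormedSpace ℝ X]
    [NormedAddCommGroup Y] [NormedSpace ℝ Y] (l : List (X × Y)) {f : X →L[ℝ] ℝ} {g : Y →L[ℝ] ℝ}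
    (hf : ‖f‖ ≤ 1) (hg : ‖g‖ ≤ 1) :
    |(l.map fun p => f p.1 * g p.2).sum| ≤ (l.map fun p => ‖p.1‖ * ‖p.2‖).sum := by
  induction l with
  | nil => simp
  | cons p l ih =>
    simp only [List.map_cons, List.sum_cons]
    refine (abs_add_le _ _).trans (add_le_add ?_ ih)
    rw [abs_mul]
    exact mul_le_mul (abs_apply_le_norm hf _) (abs_apply_le_norm hg _) (abs_nonneg _)
      (norm_nonneg _)

namespace IsInjTensorProduct

variable {X Y Z : Type*} [NormedAddCommGroup X] [NormedSpace ℝ X]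
  [NormedAddCommGroup Y] [NormedSpace ℝ Y] [NormedAddCommGroup Z] [NormedSpace ℝ Z]
  {t : X → Y → Z}

theorem abs_sum_map_mul_le_norm (ht : IsInjTensorProduct X Y Z t) (l : List (X × Y))
    {f : X →L[ℝ] ℝ} {g : Y →L[ℝ] ℝ} (hf : ‖f‖ ≤ 1) (hg : ‖g‖ ≤ 1) :
    |(l.map fun p => f p.1 * g p.2).sum| ≤ ‖(l.map fun p => t p.1 p.2).sum‖ := by
  rw [ht.2 l]
  refine le_csSup ⟨(l.map fun p => ‖p.1‖ * ‖p.2‖).sum, ?_⟩ ⟨f, g, hf, hg, rfl⟩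
  rintro _ ⟨f, g, hf, hg, rfl⟩
  exact abs_sum_map_mul_le_sum_norm_mul l hf hg

theorem norm_le_of_forall_abs_le (ht : IsInjTensorProduct X Y Z t) (l : List (X × Y)) {C : ℝ}
    (h : ∀ (f : X →L[ℝ] ℝ) (g : Y →L[ℝ] ℝ), ‖f‖ ≤ 1 → ‖g‖ ≤ 1 →
      |(l.map fun p => f p.1 * g p.2).sum| ≤ C) :
    ‖(l.map fun p => t p.1 p.2).sum‖ ≤ C := by
  rw [ht.2 l]
  refine csSup_le ⟨_, 0, 0, by simp, by simp, rfl⟩ ?_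
  rintro _ ⟨f, g, hf, hg, rfl⟩
  exact h f g hf hg

theorem exists_lt_sum_map_mul (ht : IsInjTensorProduct X Y Z t) (l : List (X × Y)) {r : ℝ}
    (hr : r < ‖(l.map fun p => t p.1 p.2).sum‖) :
    ∃ (f : X →L[ℝ] ℝ) (g : Y →L[ℝ] ℝ), ‖f‖ ≤ 1 ∧ ‖g‖ ≤ 1 ∧
      r < (l.map fun p => f p.1 * g p.2).sum := by
  by_contra! h
  refine hr.not_ge (ht.norm_le_of_forall_abs_le l fun f g hf hg => abs_le.2 ⟨?_, h f g hf hg⟩)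
  have := h (-f) g (by rwa [norm_neg]) hg
  have hneg := List.sum_map_mul_left l (fun p => f p.1 * g p.2) (-1)
  simp only [neg_one_mul] at hneg
  simp only [neg_apply, neg_mul, hneg] at this
  linarith

theorem sum_eq_zero (ht : IsInjTensorProduct X Y Z t) (l : List (X × Y))
    (h : ∀ (f : X →L[ℝ] ℝ) (g : Y →L[ℝ] ℝ), (l.map fun p => f p.1 * g p.2).sum = 0) :
    (l.map fun p => t p.1 p.2).sum = 0 :=
  norm_le_zero_iff.1 (ht.norm_le_of_forall_abs_le l fun f g _ _ => by rw [h, abs_zero])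

theorem neg_left (ht : IsInjTensorProduct X Y Z t) (x : X) (y : Y) : t (-x) y = -t x y := by
  have := ht.sum_eq_zero [(x, y), (-x, y)] fun f g => by simp
  simpa [add_eq_zero_iff_eq_neg'] using this

theorem add_left (ht : IsInjTensorProduct X Y Z t) (x x' : X) (y : Y) :
    t (x + x') y = t x y + t x' y := by
  have := ht.sum_eq_zero [(x + x', y), (-x, y), (-x', y)] fun f g => by simp; ring
  simp only [List.map_cons, List.map_nil, List.sum_cons, List.sum_nil, add_zero,
    ht.neg_left] at this
  linear_combination (norm := abel) this

theorem norm_apply_le (ht : IsInjTensorProduct X Y Z t) (x : X) (y : Y) :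
    ‖t x y‖ ≤ ‖x‖ * ‖y‖ := by
  simpa using ht.norm_le_of_forall_abs_le [(x, y)] fun f g hf hg => by
    simpa using abs_sum_map_mul_le_sum_norm_mul [(x, y)] hf hg

theorem smul_left (ht : IsInjTensorProduct X Y Z t) (c : ℝ) (x : X) (y : Y) :
    t (c • x) y = c • t x y :=
  let T : X →+ Z := AddMonoidHom.mk' (t · y) (ht.add_left · · y)
  map_real_smul T (AddMonoidHomClass.continuous_of_bound T ‖y‖ fun x => by
    simpa [T, mul_comm] using ht.norm_apply_le x y) c x

theorem norm_apply (ht : IsInjTensorProduct X Y Z t) (x : X) (y : Y) :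
    ‖t x y‖ = ‖x‖ * ‖y‖ := by
  refine le_antisymm (ht.norm_apply_le x y) ?_
  obtain ⟨f, hf, hfx⟩ := exists_dual_vector'' ℝ x
  obtain ⟨g, hg, hgy⟩ := exists_dual_vector'' ℝ y
  simpa [hfx, hgy, abs_mul] using ht.abs_sum_map_mul_le_norm [(x, y)] hf hg

theorem exists_sum_eq_of_mem_span (ht : IsInjTensorProduct X Y Z t) {z : Z}
    (hz : z ∈ Submodule.span ℝ (Set.range fun p : X × Y => t p.1 p.2)) :
    ∃ l : List (X × Y), (l.map fun p => t p.1 p.2).sum = z := by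
  induction hz using Submodule.span_induction with
  | mem z hz =>
    obtain ⟨p, rfl⟩ := hz
    exact ⟨[p], by simp⟩
  | zero => exact ⟨[], by simp⟩
  | add a b _ _ iha ihb =>
    obtain ⟨la, rfl⟩ := iha
    obtain ⟨lb, rfl⟩ := ihb
    exact ⟨la ++ lb, by simp⟩
  | smul c a _ iha =>
    obtain ⟨la, rfl⟩ := iha
    refine ⟨la.map fun p => (c • p.1, p.2), ?_⟩
    simp [List.smul_sum, Function.comp_def, ht.smul_left]

theorem exists_norm_sub_sum_lt (ht : IsInjTensorProduct X Y Z t) (z : Z) {δ : ℝ} (hδ : 0 < δ) :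
    ∃ l : List (X × Y), ‖z - (l.map fun p => t p.1 p.2).sum‖ < δ := by
  have hdense := Submodule.dense_iff_topologicalClosure_eq_top.2 ht.1
  obtain ⟨w, hw, hzw⟩ := Metric.mem_closure_iff.1 (hdense z) δ hδ
  obtain ⟨l, rfl⟩ := ht.exists_sum_eq_of_mem_span hw
  exact ⟨l, by rwa [← dist_eq_norm]⟩

theorem le_norm_sum_add (ht : IsInjTensorProduct X Y Z t)
    {E : Submodule ℝ X} {F : Submodule ℝ Y} {x₀ : X} {y₀ : Y} {δ : ℝ}
    (hE : IsAlmostL1Sum E x₀ δ) (hF : IsAlmostL1Sum F y₀ δ) (hδ : δ < 1)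
    {l : List (X × Y)} (hlE : ∀ p ∈ l, p.1 ∈ E) (hlF : ∀ p ∈ l, p.2 ∈ F)
    {f : X →L[ℝ] ℝ} {g : Y →L[ℝ] ℝ} (hf : ‖f‖ ≤ 1) (hg : ‖g‖ ≤ 1) :
    (1 - δ) ^ 2 * ((l.map fun p => f p.1 * g p.2).sum + 1) ≤
      ‖(l.map fun p => t p.1 p.2).sum + t x₀ y₀‖ := by
  obtain ⟨f', hf', hf'E, hf'x₀⟩ := hE.exists_extension hδ f hf
  obtain ⟨g', hg', hg'F, hg'y₀⟩ := hF.exists_extension hδ g hg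
  have hl : (l.map fun p => f' p.1 * g' p.2) = l.map fun p => (1 - δ) ^ 2 * (f p.1 * g p.2) :=
    List.map_congr_left fun p hp => by rw [hf'E _ (hlE p hp), hg'F _ (hlF p hp)]; ring
  have := (le_abs_self _).trans (ht.abs_sum_map_mul_le_norm (l ++ [(x₀, y₀)]) hf' hg')
  simp only [List.map_append, List.sum_append, hl, List.sum_map_mul_left, List.map_cons,
    List.map_nil, List.sum_cons, List.sum_nil, add_zero, hf'x₀, hg'y₀] at this
  linarith

theorem exists_forall_le_norm_sum_add (ht : IsInjTensorProduct X Y Z t) (hX : IsOctahedral X)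
    (hY : IsOctahedral Y) (s : Finset (X × Y)) {δ : ℝ} (hδ : 0 < δ) (hδ1 : δ < 1) :
    ∃ x₀ : X, ∃ y₀ : Y, ‖x₀‖ = 1 ∧ ‖y₀‖ = 1 ∧ ∀ l : List (X × Y), (∀ p ∈ l, p ∈ s) →
      ∀ (f : X →L[ℝ] ℝ) (g : Y →L[ℝ] ℝ), ‖f‖ ≤ 1 → ‖g‖ ≤ 1 →
        (1 - δ) ^ 2 * ((l.map fun p => f p.1 * g p.2).sum + 1) ≤
          ‖(l.map fun p => t p.1 p.2).sum + t x₀ y₀‖ := by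
  classical
  obtain ⟨x₀, hx₀, hE⟩ := hX.exists_isAlmostL1Sum (Submodule.span ℝ (s.image Prod.fst : Set X)) hδ
  obtain ⟨y₀, hy₀, hF⟩ := hY.exists_isAlmostL1Sum (Submodule.span ℝ (s.image Prod.snd : Set Y)) hδ
  exact ⟨x₀, y₀, hx₀, hy₀, fun l hl f g hf hg => ht.le_norm_sum_add hE hF hδ1
    (fun p hp => Submodule.subset_span (Finset.mem_image_of_mem _ (hl p hp)))
    (fun p hp => Submodule.subset_span (Finset.mem_image_of_mem _ (hl p hp))) hf hg⟩

end IsInjTensorProduct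

theorem statement3_general (X Y Z : Type*) [NormedAddCommGroup X] [NormedSpace ℝ X]
    [NormedAddCommGroup Y] [NormedSpace ℝ Y]
    [NormedAddCommGroup Z] [NormedSpace ℝ Z]
    (t : X → Y → Z) (ht : IsInjTensorProduct X Y Z t)
    (hX : IsOctahedral X) (hY : IsOctahedral Y) :
    IsOctahedral Z := by
  classical
  intro n u hu ε hε
  set δ := min (ε / 8) (1 / 2)
  have hδ : 0 < δ := by positivity
  have hδε : δ ≤ ε / 8 := min_le_left _ _
  have hδ1 : δ ≤ 1 / 2 := min_le_right _ _
  choose L hL using fun i => ht.exists_norm_sub_sum_lt (u i) hδ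
  choose f g hf hg hfg using fun i => ht.exists_lt_sum_map_mul (L i) (r := 1 - δ) <| by
    linarith [hu i, hL i, norm_le_insert' (u i) ((L i).map fun p => t p.1 p.2).sum]
  obtain ⟨x₀, y₀, hx₀, hy₀, hlow⟩ := ht.exists_forall_le_norm_sum_add hX hY
    (Finset.univ.biUnion fun i => (L i).toFinset) hδ (by linarith)
  refine ⟨t x₀ y₀, by rw [ht.norm_apply, hx₀, hy₀, one_mul], fun i => ?_⟩
  have hlowi := hlow (L i) (fun p hp => Finset.mem_biUnion.2 ⟨i, by simp, by simpa⟩) _ _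
    (hf i) (hg i)
  have hclose : ‖((L i).map fun p => t p.1 p.2).sum + t x₀ y₀‖ ≤
      ‖u i + t x₀ y₀‖ + ‖u i - ((L i).map fun p => t p.1 p.2).sum‖ := by
    refine le_of_eq_of_le ?_ (norm_sub_le _ _)
    congr 1
    abel
  have hpair : (1 - δ) ^ 2 * (2 - δ) ≤
      (1 - δ) ^ 2 * (((L i).map fun p => f i p.1 * g i p.2).sum + 1) :=
    mul_le_mul_of_nonneg_left (by linarith [hfg i]) (sq_nonneg _)
  have hcube : 2 - 5 * δ ≤ (1 - δ) ^ 2 * (2 - δ) := by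
    nlinarith [mul_nonneg (sq_nonneg δ) (by linarith : (0 : ℝ) ≤ 4 - δ)]
  linarith [hL i]

theorem statement3 (X Y Z : Type*) [NormedAddCommGroup X] [NormedSpace ℝ X] [CompleteSpace X]
    [NormedAddCommGroup Y] [NormedSpace ℝ Y] [CompleteSpace Y]
    [NormedAddCommGroup Z] [NormedSpace ℝ Z] [CompleteSpace Z]
    (t : X → Y → Z) (ht : IsInjTensorProduct X Y Z t)
    (hX : IsOctahedral X) (hY : IsOctahedral Y) :
    IsOctahedral Z :=
  statement3_general X Y Z t ht hX hY
end

section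
/- If X is an almost square Banach space and Y is any nonzero Banach space, then the injective tensor product X ⊗̂_ε Y is almost square. -/
open Filter Topology

/-!
Approximate each `zᵢ` by a finite tensor `uᵢ = Σ xₚ ⊗ yₚ`. The injective norm of a finite tensor
is the supremum of `‖Σ g(yₚ) xₚ‖` over `‖g‖ ≤ 1`, and for fixed `uᵢ` these contractions lie in a
compact subset of `X`. Through a finite net, almost squareness of `X` yields `x` with `‖x‖ ≈ 1`
and `‖v + s x‖ ≲ max ‖v‖ 1` for every such contraction `v` and every `|s| ≤ 1`. For a unit vector
`y ∈ Y` the contractions of `uᵢ ± x ⊗ y` are `v ± g(y) x` with `|g(y)| ≤ 1`, so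
`‖uᵢ ± x ⊗ y‖ ≲ 1`, while `‖x ⊗ y‖ = ‖x‖ ≈ 1`.
-/

section NormEstimates

variable {E : Type*} [SeminormedAddCommGroup E] [NormedSpace ℝ E]

theorem norm_add_smul_le_max_add_sub {s : ℝ} (hs : |s| ≤ 1) (v x : E) :
    ‖v + s • x‖ ≤ max ‖v + x‖ ‖v - x‖ := by
  obtain ⟨hs₁, hs₂⟩ := abs_le.mp hs
  have e : v + s • x = ((1 + s) / 2) • (v + x) + ((1 - s) / 2) • (v - x) := by module
  rw [e]
  exact (convexOn_norm convex_univ).le_on_segment' trivial trivial (by linarith) (by linarith)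
    (by ring)

theorem norm_smul_add_le_max_one_add {u x : E} {ε r : ℝ} (hε : 0 ≤ ε) (hr : 0 ≤ r) (hu : ‖u‖ = 1)
    (hx : ‖x‖ ≤ 1) (hux : ‖u + x‖ ≤ 1 + ε) : ‖r • u + x‖ ≤ max r 1 + ε := by
  rcases le_total r 1 with hr₁ | hr₁
  · calc ‖r • u + x‖ = ‖r • (u + x) + (1 - r) • x‖ := by congr 1; module
      _ ≤ max ‖u + x‖ ‖x‖ :=
        (convexOn_norm convex_univ).le_on_segment' trivial trivial hr (by linarith) (by ring)
      _ ≤ max r 1 + ε := max_le (by linarith [le_max_right r 1]) (by linarith [le_max_right r 1])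
  · calc ‖r • u + x‖ = ‖(r - 1) • u + (u + x)‖ := by congr 1; module
      _ ≤ ‖(r - 1) • u‖ + ‖u + x‖ := norm_add_le _ _
      _ = r - 1 + ‖u + x‖ := by rw [norm_smul, hu, Real.norm_of_nonneg (by linarith), mul_one]
      _ ≤ max r 1 + ε := by linarith [le_max_left r 1]

theorem norm_add_le_of_norm_sub_le {F : Type*} [SeminormedAddCommGroup F] {z u w : F} {δ : ℝ}
    (hz : ‖z‖ = 1) (hzu : ‖z - u‖ ≤ δ) (huw : ‖u + w‖ ≤ max ‖u‖ 1 + δ) :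
    ‖z + w‖ ≤ 1 + 3 * δ := by
  have hu : ‖u‖ ≤ 1 + δ := by
    have := norm_le_norm_add_norm_sub' u z
    rw [hz, norm_sub_rev] at this
    linarith
  have hmax : max ‖u‖ 1 ≤ 1 + δ := max_le hu (by linarith [norm_nonneg (z - u)])
  calc ‖z + w‖ = ‖(z - u) + (u + w)‖ := by congr 1; abel
    _ ≤ ‖z - u‖ + ‖u + w‖ := norm_add_le _ _
    _ ≤ 1 + 3 * δ := by linarith

end NormEstimates

section AlmostSquare

variable {X : Type*} [NormedAddCommGroup X] [NormedSpace ℝ X]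

theorem IsASQ.exists_norm_eq_one (hX : IsASQ X) : ∃ e : X, ‖e‖ = 1 := by
  obtain ⟨w, -, hw, -⟩ := hX 0 Fin.elim0 fun i => i.elim0
  obtain ⟨k, hk⟩ := (hw.eventually (eventually_gt_nhds zero_lt_one)).exists
  exact ⟨‖w k‖⁻¹ • w k, norm_smul_inv_norm (norm_pos_iff.mp hk)⟩

theorem IsASQ.exists_forall_norm_add_smul_le {ι : Type*} [Finite ι] (hX : IsASQ X) (v : ι → X)
    {ε : ℝ} (hε : 0 < ε) :
    ∃ x : X, ‖x‖ ≤ 1 ∧ 1 - ε ≤ ‖x‖ ∧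
      ∀ j, ∀ s : ℝ, |s| ≤ 1 → ‖v j + s • x‖ ≤ max ‖v j‖ 1 + ε := by
  classical
  obtain ⟨e, he⟩ := hX.exists_norm_eq_one
  obtain ⟨n, ⟨σ⟩⟩ := Finite.exists_equiv_fin ι
  set u : ι → X := fun j => if v j = 0 then e else ‖v j‖⁻¹ • v j
  have hu : ∀ j, ‖u j‖ = 1 := fun j => by
    simp only [u]
    split_ifs with h
    exacts [he, norm_smul_inv_norm h]
  have huv : ∀ j, ∀ x : X, ‖x‖ ≤ 1 → ‖u j + x‖ ≤ 1 + ε → ‖v j + x‖ ≤ max ‖v j‖ 1 + ε := by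
    intro j x hx hux
    by_cases h : v j = 0
    · simp only [h, zero_add, norm_zero]
      linarith [le_max_right (0 : ℝ) 1]
    · have hvu : ‖v j‖ • u j = v j := by
        simp only [u, h, if_false, smul_smul, mul_inv_cancel₀ (norm_ne_zero_iff.mpr h), one_smul]
      calc ‖v j + x‖ = ‖‖v j‖ • u j + x‖ := by rw [hvu]
        _ ≤ max ‖v j‖ 1 + ε := norm_smul_add_le_max_one_add hε.le (norm_nonneg _) (hu j) hx hux
  obtain ⟨w, hw, hw₁, hpm⟩ := hX n (u ∘ σ.symm) fun i => hu _
  have hev : ∀ᶠ k in atTop, 1 - ε < ‖w k‖ ∧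
      ∀ i, ‖u (σ.symm i) + w k‖ < 1 + ε ∧ ‖u (σ.symm i) - w k‖ < 1 + ε :=
    (hw₁.eventually (eventually_gt_nhds (by linarith))).and <| eventually_all.2 fun i =>
      ((hpm i).1.eventually (eventually_lt_nhds (by linarith))).and
        ((hpm i).2.eventually (eventually_lt_nhds (by linarith)))
  obtain ⟨k, hk, hkj⟩ := hev.exists
  refine ⟨w k, hw k, hk.le, fun j s hs =>
    (norm_add_smul_le_max_add_sub hs _ _).trans (max_le ?_ ?_)⟩
  · simpa using huv j (w k) (hw k) (by simpa using (hkj (σ j)).1.le)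
  · simpa [sub_eq_add_neg] using
      huv j (-w k) (by simpa using hw k) (by simpa [sub_eq_add_neg] using (hkj (σ j)).2.le)

theorem IsASQ.exists_forall_mem_norm_add_smul_le (hX : IsASQ X) {K : Set X} (hK : IsCompact K)
    {ε : ℝ} (hε : 0 < ε) :
    ∃ x : X, ‖x‖ ≤ 1 ∧ 1 - ε ≤ ‖x‖ ∧
      ∀ v ∈ K, ∀ s : ℝ, |s| ≤ 1 → ‖v + s • x‖ ≤ max ‖v‖ 1 + ε := by
  obtain ⟨N, -, hN, hKN⟩ := hK.finite_cover_balls (e := ε / 3) (by positivity)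
  have := hN.to_subtype
  obtain ⟨x, hx, hx₁, hxN⟩ :=
    hX.exists_forall_norm_add_smul_le (fun p : N => (p : X)) (ε := ε / 3) (by positivity)
  refine ⟨x, hx, by linarith, fun v hv s hs => ?_⟩
  obtain ⟨p, hpN, hvp⟩ := Set.mem_iUnion₂.mp (hKN hv)
  rw [Metric.mem_ball, dist_eq_norm] at hvp
  have hp : ‖p‖ ≤ ‖v‖ + ε / 3 := by
    have := norm_le_norm_add_norm_sub' p v
    rw [norm_sub_rev] at this
    linarith
  have hmax : max ‖p‖ 1 ≤ max ‖v‖ 1 + ε / 3 :=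
    max_le (by linarith [le_max_left ‖v‖ 1]) (by linarith [le_max_right ‖v‖ 1])
  calc ‖v + s • x‖ = ‖(v - p) + (p + s • x)‖ := by congr 1; abel
    _ ≤ ‖v - p‖ + ‖p + s • x‖ := norm_add_le _ _
    _ ≤ ε / 3 + (max ‖p‖ 1 + ε / 3) := add_le_add hvp.le (hxN ⟨p, hpN⟩ s hs)
    _ ≤ max ‖v‖ 1 + ε := by linarith

end AlmostSquare

theorem isASQ_of_forall_pos_exists {Z : Type*} [NormedAddCommGroup Z] [NormedSpace ℝ Z]
    (h : ∀ (n : ℕ) (z : Fin n → Z), (∀ i, ‖z i‖ = 1) → ∀ ε : ℝ, 0 < ε →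
      ∃ w : Z, ‖w‖ ≤ 1 ∧ 1 - ε ≤ ‖w‖ ∧ ∀ i, ‖z i + w‖ ≤ 1 + ε ∧ ‖z i - w‖ ≤ 1 + ε) :
    IsASQ Z := by
  intro n z hz
  have hc_pos : ∀ k : ℕ, (0 : ℝ) < 1 / (k + 1) := fun _ => Nat.one_div_pos_of_nat
  choose w hw hw₁ hpm using fun k : ℕ => h n z hz _ (hc_pos k)
  have hc : Tendsto (fun k : ℕ => (1 : ℝ) / (k + 1)) atTop (𝓝 0) :=
    tendsto_one_div_add_atTop_nhds_zero_nat
  have squeeze : ∀ a : ℕ → ℝ, (∀ k, 1 - 1 / (k + 1) ≤ a k ∧ a k ≤ 1 + 1 / (k + 1)) →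
      Tendsto a atTop (𝓝 1) := fun a ha =>
    tendsto_of_tendsto_of_tendsto_of_le_of_le
      (by simpa using (tendsto_const_nhds (x := (1 : ℝ))).sub hc)
      (by simpa using (tendsto_const_nhds (x := (1 : ℝ))).add hc)
      (fun k => (ha k).1) (fun k => (ha k).2)
  have hsum : ∀ i k, 2 ≤ ‖z i + w k‖ + ‖z i - w k‖ := fun i k => by
    calc (2 : ℝ) = ‖(2 : ℝ) • z i‖ := by rw [norm_smul, hz i]; norm_num
      _ = ‖(z i + w k) + (z i - w k)‖ := by congr 1; module
      _ ≤ ‖z i + w k‖ + ‖z i - w k‖ := norm_add_le _ _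
  refine ⟨w, hw, squeeze _ fun k => ⟨hw₁ k, by linarith [hw k, hc_pos k]⟩, fun i => ⟨?_, ?_⟩⟩
  · exact squeeze _ fun k => ⟨by linarith [hsum i k, (hpm k i).2], (hpm k i).1⟩
  · exact squeeze _ fun k => ⟨by linarith [hsum i k, (hpm k i).1], (hpm k i).2⟩

theorem ContinuousLinearMap.norm_apply_le_of_norm_le_one {E : Type*} [SeminormedAddCommGroup E]
    [NormedSpace ℝ E] {f : E →L[ℝ] ℝ} (hf : ‖f‖ ≤ 1) (x : E) : ‖f x‖ ≤ ‖x‖ := by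
  simpa using f.le_of_opNorm_le hf x

section InjectiveTensor

variable {X Y Z : Type*} [NormedAddCommGroup X] [NormedSpace ℝ X]
  [NormedAddCommGroup Y] [NormedSpace ℝ Y] [NormedAddCommGroup Z] {t : X → Y → Z}

def tensorSum (t : X → Y → Z) (l : List (X × Y)) : Z := (l.map fun p => t p.1 p.2).sum

/-- `(id ⊗ g) (Σ xₚ ⊗ yₚ) = Σ g(yₚ) xₚ`. -/
def rightContract (l : List (X × Y)) (g : Y →L[ℝ] ℝ) : X := (l.map fun p => g p.2 • p.1).sum

def HasInjectiveNorm (t : X → Y → Z) : Prop :=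
  ∀ l : List (X × Y), ‖tensorSum t l‖ =
    sSup {s : ℝ | ∃ (f : X →L[ℝ] ℝ) (g : Y →L[ℝ] ℝ), ‖f‖ ≤ 1 ∧ ‖g‖ ≤ 1 ∧
      s = |(l.map fun p => f p.1 * g p.2).sum|}

theorem map_rightContract (l : List (X × Y)) (f : X →L[ℝ] ℝ) (g : Y →L[ℝ] ℝ) :
    f (rightContract l g) = (l.map fun p => f p.1 * g p.2).sum := by
  simp [rightContract, map_list_sum, List.map_map, Function.comp_def, mul_comm]

open scoped Pointwise in
theorem exists_isCompact_rightContract (l : List (X × Y)) :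
    ∃ K : Set X, IsCompact K ∧ ∀ g : Y →L[ℝ] ℝ, ‖g‖ ≤ 1 → rightContract l g ∈ K := by
  induction l with
  | nil => exact ⟨{0}, isCompact_singleton, fun g _ => rfl⟩
  | cons p l ih =>
    obtain ⟨K, hK, hlK⟩ := ih
    refine ⟨(fun a : ℝ => a • p.1) '' Metric.closedBall 0 ‖p.2‖ + K,
      ((isCompact_closedBall _ _).image (by fun_prop)).add hK, fun g hg => ?_⟩
    refine Set.add_mem_add ⟨g p.2, ?_, rfl⟩ (hlK g hg)
    simpa using g.norm_apply_le_of_norm_le_one hg p.2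

theorem bddAbove_pairings (l : List (X × Y)) :
    BddAbove {s : ℝ | ∃ (f : X →L[ℝ] ℝ) (g : Y →L[ℝ] ℝ), ‖f‖ ≤ 1 ∧ ‖g‖ ≤ 1 ∧
      s = |(l.map fun p => f p.1 * g p.2).sum|} := by
  obtain ⟨K, hK, hlK⟩ := exists_isCompact_rightContract l
  obtain ⟨R, hR⟩ := hK.isBounded.subset_closedBall 0
  refine ⟨R, ?_⟩
  rintro s ⟨f, g, hf, hg, rfl⟩
  rw [← map_rightContract, ← Real.norm_eq_abs]
  exact (f.norm_apply_le_of_norm_le_one hf _).trans (by simpa using hR (hlK g hg))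

theorem HasInjectiveNorm.norm_le (ht : HasInjectiveNorm t) {l : List (X × Y)} {C : ℝ}
    (h : ∀ (f : X →L[ℝ] ℝ) (g : Y →L[ℝ] ℝ), ‖f‖ ≤ 1 → ‖g‖ ≤ 1 →
      |(l.map fun p => f p.1 * g p.2).sum| ≤ C) :
    ‖tensorSum t l‖ ≤ C := by
  rw [ht l]
  exact csSup_le ⟨_, 0, 0, by simp, by simp, rfl⟩ fun s ⟨f, g, hf, hg, hs⟩ => hs ▸ h f g hf hg

theorem HasInjectiveNorm.abs_le_norm (ht : HasInjectiveNorm t) (l : List (X × Y))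
    {f : X →L[ℝ] ℝ} {g : Y →L[ℝ] ℝ} (hf : ‖f‖ ≤ 1) (hg : ‖g‖ ≤ 1) :
    |(l.map fun p => f p.1 * g p.2).sum| ≤ ‖tensorSum t l‖ := by
  rw [ht l]
  exact le_csSup (bddAbove_pairings l) ⟨f, g, hf, hg, rfl⟩

theorem HasInjectiveNorm.norm_rightContract_le (ht : HasInjectiveNorm t) (l : List (X × Y))
    {g : Y →L[ℝ] ℝ} (hg : ‖g‖ ≤ 1) : ‖rightContract l g‖ ≤ ‖tensorSum t l‖ := by
  obtain ⟨f, hf, hfv⟩ := exists_dual_vector'' ℝ (rightContract l g)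
  calc ‖rightContract l g‖ = f (rightContract l g) := hfv.symm
    _ ≤ |f (rightContract l g)| := le_abs_self _
    _ ≤ ‖tensorSum t l‖ := by rw [map_rightContract]; exact ht.abs_le_norm l hf hg

theorem HasInjectiveNorm.norm_le_of_rightContract (ht : HasInjectiveNorm t)
    {l : List (X × Y)} {C : ℝ} (h : ∀ g : Y →L[ℝ] ℝ, ‖g‖ ≤ 1 → ‖rightContract l g‖ ≤ C) :
    ‖tensorSum t l‖ ≤ C :=
  ht.norm_le fun f g hf hg => by
    rw [← map_rightContract, ← Real.norm_eq_abs]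
    exact (f.norm_apply_le_of_norm_le_one hf _).trans (h g hg)

theorem HasInjectiveNorm.tensorSum_eq_zero (ht : HasInjectiveNorm t) {l : List (X × Y)}
    (h : ∀ (f : X →L[ℝ] ℝ) (g : Y →L[ℝ] ℝ), (l.map fun p => f p.1 * g p.2).sum = 0) :
    tensorSum t l = 0 :=
  norm_le_zero_iff.mp <| ht.norm_le fun f g _ _ => by rw [h, abs_zero]

theorem HasInjectiveNorm.neg_left (ht : HasInjectiveNorm t) (x : X) (y : Y) :
    t (-x) y = -t x y := by
  have h := ht.tensorSum_eq_zero (l := [(x, y), (-x, y)]) fun f g => by simp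
  simp only [tensorSum, List.map_cons, List.map_nil, List.sum_cons, List.sum_nil, add_zero] at h
  exact eq_neg_of_add_eq_zero_right h

theorem HasInjectiveNorm.add_left (ht : HasInjectiveNorm t) (a b : X) (y : Y) :
    t (a + b) y = t a y + t b y := by
  have h := ht.tensorSum_eq_zero (l := [(a + b, y), (-a, y), (-b, y)]) fun f g => by
    simp only [List.map_cons, List.map_nil, List.sum_cons, List.sum_nil, map_add, map_neg]
    ring
  simp only [tensorSum, List.map_cons, List.map_nil, List.sum_cons, List.sum_nil, add_zero,
    ht.neg_left] at h
  exact sub_eq_zero.mp (by rw [← h]; abel)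

theorem HasInjectiveNorm.norm_tmul (ht : HasInjectiveNorm t) (x : X) (y : Y) :
    ‖t x y‖ = ‖x‖ * ‖y‖ := by
  have hl : t x y = tensorSum t [(x, y)] := by simp [tensorSum]
  have hc : ∀ g : Y →L[ℝ] ℝ, rightContract [(x, y)] g = g y • x := by simp [rightContract]
  refine le_antisymm ?_ ?_
  · rw [hl]
    refine ht.norm_le_of_rightContract fun g hg => ?_
    rw [hc, norm_smul, mul_comm]
    gcongr
    exact g.norm_apply_le_of_norm_le_one hg y
  · obtain ⟨g, hg, hgy⟩ := exists_dual_vector'' ℝ y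
    calc ‖x‖ * ‖y‖ = ‖rightContract [(x, y)] g‖ := by
          simp [hc, norm_smul, hgy, mul_comm]
      _ ≤ ‖t x y‖ := hl ▸ ht.norm_rightContract_le _ hg

theorem HasInjectiveNorm.smul_left [NormedSpace ℝ Z] (ht : HasInjectiveNorm t) (c : ℝ) (x : X)
    (y : Y) :
    t (c • x) y = c • t x y := by
  let φ : X →+ Z := AddMonoidHom.mk' (t · y) fun a b => ht.add_left a b y
  have hφ : Continuous φ := AddMonoidHomClass.continuous_of_bound φ ‖y‖ fun a => by
    simp [φ, ht.norm_tmul, mul_comm]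
  exact map_real_smul φ hφ c x

theorem HasInjectiveNorm.exists_tensorSum_eq_of_mem_span [NormedSpace ℝ Z]
    (ht : HasInjectiveNorm t) {v : Z}
    (hv : v ∈ Submodule.span ℝ (Set.range fun p : X × Y => t p.1 p.2)) :
    ∃ l, tensorSum t l = v := by
  induction hv using Submodule.span_induction with
  | mem z hz =>
    obtain ⟨p, rfl⟩ := hz
    exact ⟨[p], by simp [tensorSum]⟩
  | zero => exact ⟨[], rfl⟩
  | add a b _ _ iha ihb =>
    obtain ⟨l, rfl⟩ := iha
    obtain ⟨l', rfl⟩ := ihb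
    exact ⟨l ++ l', by simp [tensorSum]⟩
  | smul c a _ iha =>
    obtain ⟨l, rfl⟩ := iha
    exact ⟨l.map fun p => (c • p.1, p.2),
      by simp [tensorSum, ht.smul_left, List.smul_sum, Function.comp_def]⟩

theorem IsInjTensorProduct.exists_tensorSum_near [NormedSpace ℝ Z]
    (ht : IsInjTensorProduct X Y Z t) (z : Z) {δ : ℝ} (hδ : 0 < δ) : ∃ l, ‖z - tensorSum t l‖ < δ := by
  have hz : z ∈ closure (Submodule.span ℝ (Set.range fun p : X × Y => t p.1 p.2) : Set Z) := by
    rw [← Submodule.topologicalClosure_coe, ht.1]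
    trivial
  obtain ⟨v, hv, hzv⟩ := Metric.mem_closure_iff.mp hz δ hδ
  obtain ⟨l, rfl⟩ := HasInjectiveNorm.exists_tensorSum_eq_of_mem_span ht.2 hv
  exact ⟨l, by rwa [← dist_eq_norm]⟩

theorem HasInjectiveNorm.norm_tensorSum_add_tmul_le (ht : HasInjectiveNorm t)
    (l : List (X × Y)) (x : X) {y : Y} (hy : ‖y‖ ≤ 1) {C : ℝ}
    (h : ∀ g : Y →L[ℝ] ℝ, ‖g‖ ≤ 1 → ∀ s : ℝ, |s| ≤ 1 → ‖rightContract l g + s • x‖ ≤ C) :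
    ‖tensorSum t l + t x y‖ ≤ C ∧ ‖tensorSum t l - t x y‖ ≤ C := by
  have key : ∀ x' : X, (∀ g : Y →L[ℝ] ℝ, ‖g‖ ≤ 1 → ∀ s : ℝ, |s| ≤ 1 →
      ‖rightContract l g + s • x'‖ ≤ C) → ‖tensorSum t l + t x' y‖ ≤ C := by
    intro x' h'
    have e : tensorSum t l + t x' y = tensorSum t (l ++ [(x', y)]) := by simp [tensorSum]
    rw [e]
    refine ht.norm_le_of_rightContract fun g hg => ?_
    have hc : rightContract (l ++ [(x', y)]) g = rightContract l g + g y • x' := by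
      simp [rightContract]
    rw [hc]
    exact h' g hg (g y) (by simpa using (g.norm_apply_le_of_norm_le_one hg y).trans hy)
  refine ⟨key x h, ?_⟩
  rw [sub_eq_add_neg, ← ht.neg_left]
  refine key (-x) fun g hg s hs => ?_
  rw [smul_neg, ← neg_smul]
  exact h g hg (-s) (by rwa [abs_neg])

end InjectiveTensor

theorem statement5_general (X Y Z : Type*) [NormedAddCommGroup X] [NormedSpace ℝ X]
    [NormedAddCommGroup Y] [NormedSpace ℝ Y] [Nontrivial Y]
    [NormedAddCommGroup Z] [NormedSpace ℝ Z]
    (t : X → Y → Z) (ht : IsInjTensorProduct X Y Z t)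
    (hX : IsASQ X) :
    IsASQ Z := by
  refine isASQ_of_forall_pos_exists fun n z hz ε hε => ?_
  have hn : HasInjectiveNorm t := ht.2
  obtain ⟨y, hy⟩ := exists_norm_eq Y zero_le_one
  choose l hl using fun i => ht.exists_tensorSum_near (z i) (δ := ε / 3) (by positivity)
  choose K hK hlK using fun i => exists_isCompact_rightContract (l i)
  obtain ⟨x, hx, hx₁, hxK⟩ :=
    hX.exists_forall_mem_norm_add_smul_le (isCompact_iUnion hK) (ε := ε / 3) (by positivity)
  have hxy : ‖t x y‖ = ‖x‖ := by rw [hn.norm_tmul, hy, mul_one]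
  refine ⟨t x y, hxy ▸ hx, by linarith, fun i => ?_⟩
  have hC : ∀ g : Y →L[ℝ] ℝ, ‖g‖ ≤ 1 → ∀ s : ℝ, |s| ≤ 1 →
      ‖rightContract (l i) g + s • x‖ ≤ max ‖tensorSum t (l i)‖ 1 + ε / 3 := fun g hg s hs =>
    (hxK _ (Set.mem_iUnion.mpr ⟨i, hlK i g hg⟩) s hs).trans <| by
      gcongr
      exact hn.norm_rightContract_le _ hg
  obtain ⟨hplus, hminus⟩ := hn.norm_tensorSum_add_tmul_le (l i) x hy.le hC
  rw [sub_eq_add_neg] at hminus ⊢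
  constructor
  · linarith [norm_add_le_of_norm_sub_le (hz i) (hl i).le hplus]
  · linarith [norm_add_le_of_norm_sub_le (hz i) (hl i).le hminus]

theorem statement5 (X Y Z : Type*) [NormedAddCommGroup X] [NormedSpace ℝ X] [CompleteSpace X]
    [NormedAddCommGroup Y] [NormedSpace ℝ Y] [CompleteSpace Y] [Nontrivial Y]
    [NormedAddCommGroup Z] [NormedSpace ℝ Z] [CompleteSpace Z]
    (t : X → Y → Z) (ht : IsInjTensorProduct X Y Z t)
    (hX : IsASQ X) :
    IsASQ Z :=
  statement5_general X Y Z t ht hX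
end

section
/- For any Banach space X, the projective tensor product c₀ ⊗̂_π X is locally almost square. -/
open Filter Topology

/-! ### Auxiliary development for `statement7`. -/

noncomputable section LASQAux

open ZeroAtInftyContinuousMap

local notation "𝔠₀" => ZeroAtInftyContinuousMap ℕ ℝ

section ListHelpers

variable {α : Type*} {M : Type*} [AddCommGroup M]

lemma listSumMapAdd (l : List α) (f g : α → M) :
    (l.map fun a => f a + g a).sum = (l.map f).sum + (l.map g).sum := by
  induction l with
  | nil => simp
  | cons a l ih => simp [ih]; abel

lemma listSumMapNeg (l : List α) (f : α → M) :
    (l.map fun a => -f a).sum = -(l.map f).sum := by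
  induction l with
  | nil => simp
  | cons a l ih => simp [ih]; abel

lemma listSumMapSub (l : List α) (f g : α → M) :
    (l.map fun a => f a - g a).sum = (l.map f).sum - (l.map g).sum := by
  simp only [sub_eq_add_neg, listSumMapAdd l f (fun a => -g a), listSumMapNeg]

lemma listSumMapSmul [Module ℝ M] (l : List α) (c : ℝ) (f : α → M) :
    (l.map fun a => c • f a).sum = c • (l.map f).sum := by
  induction l with
  | nil => simp
  | cons a l ih => simp [ih, smul_add]

end ListHelpers

section CzeroBasics

lemma czero_apply_le_norm (f : 𝔠₀) (k : ℕ) : |f k| ≤ ‖f‖ := by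
  rw [← ZeroAtInftyContinuousMap.norm_toBCF_eq_norm]
  simpa [Real.norm_eq_abs] using f.toBCF.norm_coe_le_norm k

lemma czero_norm_le (f : 𝔠₀) {C : ℝ} (hC : 0 ≤ C) (h : ∀ k, |f k| ≤ C) : ‖f‖ ≤ C := by
  rw [← ZeroAtInftyContinuousMap.norm_toBCF_eq_norm]
  exact (BoundedContinuousFunction.norm_le hC).2 fun k => by
    simpa [Real.norm_eq_abs] using h k

/-- A finitely supported function as an element of `c₀`. -/
def czeroMk (g : ℕ → ℝ) (N : ℕ) (hg : ∀ k, N < k → g k = 0) : 𝔠₀ :=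
  ⟨⟨g, continuous_of_discreteTopology⟩, by
    rw [cocompact_eq_atTop]
    refine Filter.Tendsto.congr' ?_ tendsto_const_nhds
    filter_upwards [Filter.eventually_gt_atTop N] with k hk
    exact (hg k hk).symm⟩

@[simp] lemma czeroMk_apply (g : ℕ → ℝ) (N : ℕ) (hg : ∀ k, N < k → g k = 0) (k : ℕ) :
    czeroMk g N hg k = g k := rfl

/-- A "reindexing with cutoff" operator on `c₀`. -/
def reindexOp (σ : ℕ → ℕ) (cond : ℕ → Prop) [DecidablePred cond] (N : ℕ)
    (hN : ∀ k, N < k → ¬ cond k) : 𝔠₀ →L[ℝ] 𝔠₀ :=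
  LinearMap.mkContinuous
    { toFun := fun f => czeroMk (fun k => if cond k then f (σ k) else 0) N
        (fun k hk => by simp [hN k hk])
      map_add' := fun f g => by
        ext k
        by_cases h : cond k <;> simp [h]
      map_smul' := fun c f => by
        ext k
        by_cases h : cond k <;> simp [h] }
    1 (fun f => by
      rw [one_mul]
      refine czero_norm_le _ (norm_nonneg f) fun k => ?_
      by_cases h : cond k
      · simpa [h] using czero_apply_le_norm f (σ k)
      · simp [h])

@[simp] lemma reindexOp_apply (σ : ℕ → ℕ) (cond : ℕ → Prop) [DecidablePred cond] (N : ℕ)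
    (hN : ∀ k, N < k → ¬ cond k) (f : 𝔠₀) (k : ℕ) :
    reindexOp σ cond N hN f k = if cond k then f (σ k) else 0 := rfl

lemma reindexOp_norm_le (σ : ℕ → ℕ) (cond : ℕ → Prop) [DecidablePred cond] (N : ℕ)
    (hN : ∀ k, N < k → ¬ cond k) (f : 𝔠₀) : ‖reindexOp σ cond N hN f‖ ≤ ‖f‖ := by
  refine czero_norm_le _ (norm_nonneg f) fun k => ?_
  by_cases h : cond k
  · simpa [h] using czero_apply_le_norm f (σ k)
  · simp [h]

/-- Truncation to coordinates `≤ N`. -/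
def truncOp (N : ℕ) : 𝔠₀ →L[ℝ] 𝔠₀ :=
  reindexOp id (fun k => k ≤ N) N (fun k hk => by omega)

/-- Shift of the coordinates `[0, N]` to `[N+1, 2N+1]`. -/
def shiftOp (N : ℕ) : 𝔠₀ →L[ℝ] 𝔠₀ :=
  reindexOp (fun k => k - (N + 1)) (fun k => N + 1 ≤ k ∧ k ≤ 2 * N + 1) (2 * N + 1)
    (fun k hk => by omega)

/-- Shift of the coordinates `[N+1, 2N+1]` back to `[0, N]`. -/
def backOp (N : ℕ) : 𝔠₀ →L[ℝ] 𝔠₀ :=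
  reindexOp (fun k => k + (N + 1)) (fun k => k ≤ N) N (fun k hk => by omega)

lemma trunc_norm_le (N : ℕ) (f : 𝔠₀) : ‖truncOp N f‖ ≤ ‖f‖ := reindexOp_norm_le _ _ _ _ f

lemma shift_norm_le (N : ℕ) (f : 𝔠₀) : ‖shiftOp N f‖ ≤ ‖f‖ := reindexOp_norm_le _ _ _ _ f

lemma back_norm_le (N : ℕ) (f : 𝔠₀) : ‖backOp N f‖ ≤ ‖f‖ := reindexOp_norm_le _ _ _ _ f

lemma back_shift_trunc (N : ℕ) (f : 𝔠₀) :
    backOp N (shiftOp N (truncOp N f)) = truncOp N f := by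
  ext k
  simp only [backOp, shiftOp, truncOp, reindexOp_apply, id_eq]
  by_cases h : k ≤ N
  · have h2 : k + (N + 1) - (N + 1) = k := by omega
    simp [h, h2, (by omega : N + 1 ≤ k + (N + 1) ∧ k + (N + 1) ≤ 2 * N + 1)]
  · simp [h]

lemma trunc_shift (N : ℕ) (f : 𝔠₀) : truncOp N (shiftOp N f) = 0 := by
  ext k
  simp only [truncOp, shiftOp, reindexOp_apply, id_eq, ZeroAtInftyContinuousMap.coe_zero,
    Pi.zero_apply]
  by_cases h : k ≤ N
  · rw [if_pos h]
    exact if_neg (by omega)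
  · simp [h]

lemma trunc_trunc (N : ℕ) (f : 𝔠₀) : truncOp N (truncOp N f) = truncOp N f := by
  ext k
  simp only [truncOp, reindexOp_apply, id_eq]
  by_cases h : k ≤ N <;> simp [h]

lemma trunc_add_smul_shift (N : ℕ) (f : 𝔠₀) (c : ℝ) :
    truncOp N (truncOp N f + c • shiftOp N (truncOp N f)) = truncOp N f := by
  rw [map_add, map_smul, trunc_trunc, trunc_shift, smul_zero, add_zero]

lemma key_czero_norm (N : ℕ) (f : 𝔠₀) (c : ℝ) :
    ‖truncOp N f + c • shiftOp N (truncOp N f)‖ ≤ max 1 |c| * ‖f‖ := by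
  have h1M : (1 : ℝ) ≤ max 1 |c| := le_max_left _ _
  have hM : (0 : ℝ) ≤ max 1 |c| := le_trans zero_le_one h1M
  have hcM : |c| ≤ max 1 |c| := le_max_right _ _
  refine czero_norm_le _ (by positivity) fun k => ?_
  have happ : (truncOp N f + c • shiftOp N (truncOp N f)) k
      = truncOp N f k + c * shiftOp N (truncOp N f) k := by
    simp
  rw [happ]
  by_cases h : k ≤ N
  · have h2 : shiftOp N (truncOp N f) k = 0 := by
      simp only [shiftOp, reindexOp_apply]
      exact if_neg (by omega : ¬ (N + 1 ≤ k ∧ k ≤ 2 * N + 1))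
    rw [h2, mul_zero, add_zero]
    calc |truncOp N f k| ≤ ‖truncOp N f‖ := czero_apply_le_norm _ _
      _ ≤ ‖f‖ := trunc_norm_le N f
      _ ≤ max 1 |c| * ‖f‖ := le_mul_of_one_le_left (norm_nonneg f) h1M
  · have h2 : truncOp N f k = 0 := by
      simp only [truncOp, reindexOp_apply]
      exact if_neg h
    rw [h2, zero_add, abs_mul]
    have h3 : |shiftOp N (truncOp N f) k| ≤ ‖f‖ := by
      calc |shiftOp N (truncOp N f) k| ≤ ‖shiftOp N (truncOp N f)‖ := czero_apply_le_norm _ _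
        _ ≤ ‖truncOp N f‖ := shift_norm_le _ _
        _ ≤ ‖f‖ := trunc_norm_le N f
    calc |c| * |shiftOp N (truncOp N f) k| ≤ |c| * ‖f‖ :=
          mul_le_mul_of_nonneg_left h3 (abs_nonneg c)
      _ ≤ max 1 |c| * ‖f‖ := mul_le_mul_of_nonneg_right hcM (norm_nonneg f)

/-- Choosing a uniform tail bound for the first components of a list. -/
lemma exists_tail_bound {X : Type*} [NormedAddCommGroup X] (l : List (𝔠₀ × X)) {δ : ℝ}
    (hδ : 0 < δ) : ∃ N : ℕ, ∀ p ∈ l, ∀ k : ℕ, N < k → |p.1 k| ≤ δ := by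
  induction l with
  | nil => exact ⟨0, by simp⟩
  | cons p l ih =>
    obtain ⟨N, hN⟩ := ih
    have h1 : Filter.Tendsto (⇑p.1) Filter.atTop (nhds 0) := by
      have := zero_at_infty p.1
      rwa [cocompact_eq_atTop] at this
    have h2 : ∀ᶠ k in Filter.atTop, |p.1 k| ≤ δ := by
      filter_upwards [h1.eventually (Metric.ball_mem_nhds 0 hδ)] with k hk
      rw [Real.dist_eq, sub_zero] at hk

      exact le_of_lt hk
    obtain ⟨M, hM⟩ := Filter.eventually_atTop.mp h2
    refine ⟨max N M, ?_⟩
    rintro q hq k hk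
    rcases List.mem_cons.mp hq with rfl | hq
    · exact hM k (by omega)
    · exact hN q hq k (by omega)

end CzeroBasics

section TensorBasics

variable {X Z : Type*} [NormedAddCommGroup X] [NormedSpace ℝ X]
  [NormedAddCommGroup Z] [NormedSpace ℝ Z]

lemma tp_bddBelow (t : 𝔠₀ → X → Z) (l : List (𝔠₀ × X)) :
    BddBelow {s : ℝ | ∃ l' : List (𝔠₀ × X),
      (∀ (f : 𝔠₀ →L[ℝ] ℝ) (g : X →L[ℝ] ℝ),
        (l'.map fun p => f p.1 * g p.2).sum = (l.map fun p => f p.1 * g p.2).sum) ∧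
      s = (l'.map fun p => ‖p.1‖ * ‖p.2‖).sum} := by
  refine ⟨0, ?_⟩
  rintro s ⟨l', -, rfl⟩
  refine List.sum_nonneg ?_
  intro x hx
  obtain ⟨p, -, rfl⟩ := List.mem_map.1 hx
  positivity

lemma tp_zero (t : 𝔠₀ → X → Z) (ht : IsProjTensorProduct 𝔠₀ X Z t) {l : List (𝔠₀ × X)}
    (h : ∀ (f : 𝔠₀ →L[ℝ] ℝ) (g : X →L[ℝ] ℝ), (l.map fun p => f p.1 * g p.2).sum = 0) :
    (l.map fun p => t p.1 p.2).sum = 0 := by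
  have hub : ‖(l.map fun p => t p.1 p.2).sum‖ ≤ 0 := by
    rw [ht.2 l]
    exact csInf_le (tp_bddBelow t l) ⟨[], fun f g => by simpa using (h f g).symm, by simp⟩
  exact norm_le_zero_iff.mp hub

lemma tp_norm_le (t : 𝔠₀ → X → Z) (ht : IsProjTensorProduct 𝔠₀ X Z t) (l : List (𝔠₀ × X)) :
    ‖(l.map fun p => t p.1 p.2).sum‖ ≤ (l.map fun p => ‖p.1‖ * ‖p.2‖).sum := by
  rw [ht.2 l]
  exact csInf_le (tp_bddBelow t l) ⟨l, fun f g => rfl, rfl⟩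

lemma tp_neg (t : 𝔠₀ → X → Z) (ht : IsProjTensorProduct 𝔠₀ X Z t) (f : 𝔠₀) (x : X) :
    t (-f) x = -(t f x) := by
  have h0 := tp_zero t ht (l := [(-f, x), (f, x)]) (fun f' g => by
    simp only [List.map_cons, List.map_nil, List.sum_cons, List.sum_nil, map_neg]
    ring)
  simp only [List.map_cons, List.map_nil, List.sum_cons, List.sum_nil, add_zero] at h0
  exact eq_neg_of_add_eq_zero_left h0

lemma tp_add (t : 𝔠₀ → X → Z) (ht : IsProjTensorProduct 𝔠₀ X Z t) (f g : 𝔠₀) (x : X) :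
    t (f + g) x = t f x + t g x := by
  have h0 := tp_zero t ht (l := [(f + g, x), (-f, x), (-g, x)]) (fun f' g' => by
    simp only [List.map_cons, List.map_nil, List.sum_cons, List.sum_nil, map_neg, map_add]
    ring)
  simp only [List.map_cons, List.map_nil, List.sum_cons, List.sum_nil, add_zero,
    tp_neg t ht] at h0
  have h2 := eq_neg_of_add_eq_zero_left h0
  rw [h2]; abel

lemma tp_sub (t : 𝔠₀ → X → Z) (ht : IsProjTensorProduct 𝔠₀ X Z t) (f g : 𝔠₀) (x : X) :
    t (f - g) x = t f x - t g x := by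
  rw [sub_eq_add_neg, tp_add t ht, tp_neg t ht, sub_eq_add_neg]

lemma tp_bound (t : 𝔠₀ → X → Z) (ht : IsProjTensorProduct 𝔠₀ X Z t) (f : 𝔠₀) (x : X) :
    ‖t f x‖ ≤ ‖f‖ * ‖x‖ := by
  simpa using tp_norm_le t ht [(f, x)]

lemma tp_smul (t : 𝔠₀ → X → Z) (ht : IsProjTensorProduct 𝔠₀ X Z t) (c : ℝ) (f : 𝔠₀) (x : X) :
    t (c • f) x = c • t f x := by
  set F : 𝔠₀ →+ Z := AddMonoidHom.mk' (fun f => t f x) (fun a b => tp_add t ht a b x) with hF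
  have hFc : Continuous F := by
    have hlip : LipschitzWith ‖x‖₊ F := by
      refine LipschitzWith.of_dist_le_mul fun a b => ?_
      have hFa : F a = t a x := rfl
      have hFb : F b = t b x := rfl
      rw [dist_eq_norm, dist_eq_norm, hFa, hFb, ← tp_sub t ht]
      calc ‖t (a - b) x‖ ≤ ‖a - b‖ * ‖x‖ := tp_bound t ht _ _
        _ = ↑‖x‖₊ * ‖a - b‖ := by rw [coe_nnnorm]; ring
    exact hlip.continuous
  exact map_real_smul F hFc c f

lemma tp_transport (t : 𝔠₀ → X → Z) (ht : IsProjTensorProduct 𝔠₀ X Z t)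
    (l₁ l₂ : List (𝔠₀ × X))
    (h : ∀ (f : 𝔠₀ →L[ℝ] ℝ) (g : X →L[ℝ] ℝ),
      (l₁.map fun p => f p.1 * g p.2).sum = (l₂.map fun p => f p.1 * g p.2).sum) :
    (l₁.map fun p => t p.1 p.2).sum = (l₂.map fun p => t p.1 p.2).sum := by
  have h0 := tp_zero t ht (l := l₁ ++ l₂.map fun p => (-p.1, p.2)) (fun f g => by
    rw [List.map_append, List.sum_append, List.map_map]
    have hcomp : ((fun p : 𝔠₀ × X => f p.1 * g p.2) ∘ fun p : 𝔠₀ × X => (-p.1, p.2))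
        = fun p : 𝔠₀ × X => -(f p.1 * g p.2) := by
      funext p
      simp [neg_mul]
    rw [hcomp, listSumMapNeg, h f g]
    simp)
  rw [List.map_append, List.sum_append, List.map_map] at h0
  have hcomp : ((fun p : 𝔠₀ × X => t p.1 p.2) ∘ fun p : 𝔠₀ × X => (-p.1, p.2))
      = fun p : 𝔠₀ × X => -(t p.1 p.2) := by
    funext p
    exact tp_neg t ht p.1 p.2
  rw [hcomp, listSumMapNeg] at h0
  have h1 : (l₁.map fun p => t p.1 p.2).sum - (l₂.map fun p => t p.1 p.2).sum = 0 := by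
    rw [sub_eq_add_neg]; exact h0
  exact sub_eq_zero.mp h1

lemma tp_map_sum_eq (t : 𝔠₀ → X → Z) (A : 𝔠₀ →L[ℝ] 𝔠₀) (l : List (𝔠₀ × X)) :
    ((l.map fun p : 𝔠₀ × X => (A p.1, p.2)).map fun p => t p.1 p.2).sum
      = (l.map fun p => t (A p.1) p.2).sum := by
  rw [List.map_map]
  rfl

lemma tp_mono (t : 𝔠₀ → X → Z) (ht : IsProjTensorProduct 𝔠₀ X Z t) (A : 𝔠₀ →L[ℝ] 𝔠₀)
    (hA : ∀ f, ‖A f‖ ≤ ‖f‖) (l : List (𝔠₀ × X)) :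
    ‖(l.map fun p => t (A p.1) p.2).sum‖ ≤ ‖(l.map fun p => t p.1 p.2).sum‖ := by
  rw [ht.2 l]
  refine le_csInf ⟨_, l, fun f g => rfl, rfl⟩ ?_
  rintro s ⟨l', hp, rfl⟩
  have hpair : ∀ (f : 𝔠₀ →L[ℝ] ℝ) (g : X →L[ℝ] ℝ),
      ((l.map fun p : 𝔠₀ × X => (A p.1, p.2)).map fun p => f p.1 * g p.2).sum
        = ((l'.map fun p : 𝔠₀ × X => (A p.1, p.2)).map fun p => f p.1 * g p.2).sum := by
    intro f g
    rw [List.map_map, List.map_map]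
    exact (hp (f.comp A) g).symm
  have h1 := tp_transport t ht (l.map fun p : 𝔠₀ × X => (A p.1, p.2))
    (l'.map fun p : 𝔠₀ × X => (A p.1, p.2)) hpair
  rw [tp_map_sum_eq, tp_map_sum_eq] at h1
  calc ‖(l.map fun p => t (A p.1) p.2).sum‖
      = ‖(l'.map fun p => t (A p.1) p.2).sum‖ := by rw [h1]
    _ ≤ (l'.map fun p => ‖A p.1‖ * ‖p.2‖).sum := by
        have h2 := tp_norm_le t ht (l'.map fun p : 𝔠₀ × X => (A p.1, p.2))
        rw [tp_map_sum_eq, List.map_map] at h2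
        exact h2
    _ ≤ (l'.map fun p => ‖p.1‖ * ‖p.2‖).sum := by
        refine List.sum_le_sum fun p _ => ?_
        exact mul_le_mul_of_nonneg_right (hA p.1) (norm_nonneg p.2)

lemma tp_span_rep (t : 𝔠₀ → X → Z) (ht : IsProjTensorProduct 𝔠₀ X Z t) (y : Z)
    (hy : y ∈ Submodule.span ℝ (Set.range fun p : 𝔠₀ × X => t p.1 p.2)) :
    ∃ l : List (𝔠₀ × X), (l.map fun p => t p.1 p.2).sum = y := by
  induction hy using Submodule.span_induction with
  | mem x hx =>
    obtain ⟨p, rfl⟩ := hx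
    exact ⟨[p], by simp⟩
  | zero => exact ⟨[], by simp⟩
  | add x y _ _ hx hy =>
    obtain ⟨l₁, h1⟩ := hx
    obtain ⟨l₂, h2⟩ := hy
    exact ⟨l₁ ++ l₂, by rw [List.map_append, List.sum_append, h1, h2]⟩
  | smul c x _ hx =>
    obtain ⟨l, hl⟩ := hx
    refine ⟨l.map fun p => (c • p.1, p.2), ?_⟩
    rw [List.map_map]
    have hcomp : ((fun p : 𝔠₀ × X => t p.1 p.2) ∘ fun p : 𝔠₀ × X => (c • p.1, p.2))
        = fun p : 𝔠₀ × X => c • t p.1 p.2 := by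
      funext p
      exact tp_smul t ht c p.1 p.2
    rw [hcomp, listSumMapSmul, hl]

lemma tp_norm_le' (t : 𝔠₀ → X → Z) (ht : IsProjTensorProduct 𝔠₀ X Z t)
    (φ : 𝔠₀ × X → 𝔠₀) (l : List (𝔠₀ × X)) :
    ‖(l.map fun p => t (φ p) p.2).sum‖ ≤ (l.map fun p => ‖φ p‖ * ‖p.2‖).sum := by
  have h := tp_norm_le t ht (l.map fun p => (φ p, p.2))
  rw [List.map_map, List.map_map] at h
  exact h

lemma tp_mono' (t : 𝔠₀ → X → Z) (ht : IsProjTensorProduct 𝔠₀ X Z t) (A : 𝔠₀ →L[ℝ] 𝔠₀)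
    (hA : ∀ f, ‖A f‖ ≤ ‖f‖) (φ : 𝔠₀ × X → 𝔠₀) (l : List (𝔠₀ × X)) :
    ‖(l.map fun p => t (A (φ p)) p.2).sum‖ ≤ ‖(l.map fun p => t (φ p) p.2).sum‖ := by
  have h := tp_mono t ht A hA (l.map fun p => (φ p, p.2))
  rw [List.map_map, List.map_map] at h
  exact h

lemma trunc_sub_smul_shift (N : ℕ) (f : 𝔠₀) (c : ℝ) :
    truncOp N (truncOp N f - c • shiftOp N (truncOp N f)) = truncOp N f := by
  rw [map_sub, map_smul, trunc_trunc, trunc_shift, smul_zero, sub_zero]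

/-- The main quantitative step. -/
lemma tp_step (t : 𝔠₀ → X → Z) (ht : IsProjTensorProduct 𝔠₀ X Z t) (z : Z) (hz : ‖z‖ = 1)
    {ε : ℝ} (hε : 0 < ε) (hε4 : ε ≤ 1 / 4) :
    ∃ w : Z, ‖w‖ = 1 ∧ ‖z + w‖ ≤ 1 + 10 * ε ∧ ‖z - w‖ ≤ 1 + 10 * ε ∧
      1 - 4 * ε ≤ ‖z + w‖ ∧ 1 - 4 * ε ≤ ‖z - w‖ := by
  have hε2 : 0 < 1 - 2 * ε := by linarith
  -- Step 1: approximate `z` by a finite sum of elementary tensors.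
  have hzmem : z ∈ closure ((Submodule.span ℝ
      (Set.range fun p : 𝔠₀ × X => t p.1 p.2)) : Set Z) := by
    rw [← Submodule.topologicalClosure_coe, ht.1]
    trivial
  obtain ⟨y, hy_mem, hy_dist⟩ := Metric.mem_closure_iff.mp hzmem ε hε
  obtain ⟨l₀, hl₀⟩ := tp_span_rep t ht y hy_mem
  set u₀ : Z := (l₀.map fun p => t p.1 p.2).sum with hu₀def
  have hzu₀ : ‖z - u₀‖ < ε := by
    rw [hl₀, ← dist_eq_norm]
    exact hy_dist
  have hu₀norm : ‖u₀‖ < 1 + ε := by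
    have h1 : ‖u₀‖ ≤ ‖z‖ + ‖z - u₀‖ := by
      calc ‖u₀‖ = ‖z - (z - u₀)‖ := by rw [sub_sub_cancel]
        _ ≤ ‖z‖ + ‖z - u₀‖ := norm_sub_le _ _
    rw [hz] at h1
    linarith
  -- Step 2: a representation with small projective norm.
  have h2 : ‖u₀‖ = sInf {s : ℝ | ∃ l' : List (𝔠₀ × X),
      (∀ (f : 𝔠₀ →L[ℝ] ℝ) (g : X →L[ℝ] ℝ),
        (l'.map fun p => f p.1 * g p.2).sum = (l₀.map fun p => f p.1 * g p.2).sum) ∧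
      s = (l'.map fun p => ‖p.1‖ * ‖p.2‖).sum} := ht.2 l₀
  obtain ⟨s₁, hs₁mem, hs₁lt⟩ := Real.lt_sInf_add_pos
    (⟨_, ⟨l₀, fun f g => rfl, rfl⟩⟩ : Set.Nonempty {s : ℝ | ∃ l' : List (𝔠₀ × X),
      (∀ (f : 𝔠₀ →L[ℝ] ℝ) (g : X →L[ℝ] ℝ),
        (l'.map fun p => f p.1 * g p.2).sum = (l₀.map fun p => f p.1 * g p.2).sum) ∧
      s = (l'.map fun p => ‖p.1‖ * ‖p.2‖).sum}) hε
  rw [← h2] at hs₁lt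
  obtain ⟨l₁, hl₁pair, rfl⟩ := hs₁mem
  have hs₁ : (l₁.map fun p => ‖p.1‖ * ‖p.2‖).sum < 1 + 2 * ε := by linarith
  have hl₁sum : (l₁.map fun p => t p.1 p.2).sum = u₀ := by
    rw [hu₀def]
    exact tp_transport t ht l₁ l₀ hl₁pair
  -- Step 3: truncate the first components.
  set B : ℝ := (l₁.map fun p => ‖p.2‖).sum with hB
  have hB0 : 0 ≤ B := by
    refine List.sum_nonneg ?_
    intro x hx
    obtain ⟨p, -, rfl⟩ := List.mem_map.1 hx
    positivity
  have hδpos : 0 < ε / (1 + B) := by positivity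
  obtain ⟨N, hN⟩ := exists_tail_bound l₁ hδpos
  set u' : Z := (l₁.map fun p => t (truncOp N p.1) p.2).sum with hu'
  have htrbound : ∀ p ∈ l₁, ‖p.1 - truncOp N p.1‖ ≤ ε / (1 + B) := by
    intro p hp
    refine czero_norm_le _ (le_of_lt hδpos) fun k => ?_
    have happ : (p.1 - truncOp N p.1) k = p.1 k - truncOp N p.1 k := by simp
    rw [happ]
    by_cases h : k ≤ N
    · have h3 : truncOp N p.1 k = p.1 k := by
        simp only [truncOp, reindexOp_apply, id_eq]
        rw [if_pos h]
      rw [h3, sub_self, abs_zero]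
      exact le_of_lt hδpos
    · have h3 : truncOp N p.1 k = 0 := by
        simp only [truncOp, reindexOp_apply, id_eq]
        rw [if_neg h]
      rw [h3, sub_zero]
      exact hN p hp k (by omega)
  have hu₀u' : ‖u₀ - u'‖ ≤ ε := by
    have hdiff : u₀ - u' = (l₁.map fun p => t (p.1 - truncOp N p.1) p.2).sum := by
      rw [← hl₁sum, hu',
        ← listSumMapSub l₁ (fun p => t p.1 p.2) (fun p => t (truncOp N p.1) p.2)]
      congr 1
      refine List.map_congr_left fun p hp => ?_
      exact (tp_sub t ht p.1 (truncOp N p.1) p.2).symm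
    rw [hdiff]
    calc ‖(l₁.map fun p => t (p.1 - truncOp N p.1) p.2).sum‖
        ≤ (l₁.map fun p => ‖p.1 - truncOp N p.1‖ * ‖p.2‖).sum :=
          tp_norm_le' t ht _ l₁
      _ ≤ (l₁.map fun p => (ε / (1 + B)) * ‖p.2‖).sum := by
          refine List.sum_le_sum fun p hp => ?_
          exact mul_le_mul_of_nonneg_right (htrbound p hp) (norm_nonneg _)
      _ = (ε / (1 + B)) * B := by
          rw [hB]
          simpa [smul_eq_mul] using listSumMapSmul l₁ (ε / (1 + B)) (fun p => ‖p.2‖)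
      _ ≤ ε := by
          rw [div_mul_eq_mul_div, div_le_iff₀ (by positivity)]
          nlinarith
  have hzu' : ‖z - u'‖ ≤ 2 * ε := by
    have h3 : z - u' = (z - u₀) + (u₀ - u') := by abel
    calc ‖z - u'‖ = ‖(z - u₀) + (u₀ - u')‖ := by rw [h3]
      _ ≤ ‖z - u₀‖ + ‖u₀ - u'‖ := norm_add_le _ _
      _ ≤ 2 * ε := by linarith
  have hu'lb : 1 - 2 * ε ≤ ‖u'‖ := by
    have h4 := norm_sub_norm_le z u'
    rw [hz] at h4
    linarith
  have hu'pos : 0 < ‖u'‖ := by linarith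
  -- Step 4: the shifted copy.
  set v : Z := (l₁.map fun p => t (shiftOp N (truncOp N p.1)) p.2).sum with hv
  have hvu' : ‖v‖ = ‖u'‖ := by
    refine le_antisymm ?_ ?_
    · have h5 := tp_mono' t ht (shiftOp N) (shift_norm_le N) (fun p => truncOp N p.1) l₁
      rw [← hv, ← hu'] at h5
      exact h5
    · have h5 := tp_mono' t ht (backOp N) (back_norm_le N)
        (fun p => shiftOp N (truncOp N p.1)) l₁
      simp only [back_shift_trunc] at h5
      rw [← hv, ← hu'] at h5
      exact h5
  set c : ℝ := ‖u'‖⁻¹ with hc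
  have hcpos : 0 < c := inv_pos.mpr hu'pos
  have hcle : c ≤ (1 - 2 * ε)⁻¹ := by
    rw [hc]
    exact inv_anti₀ hε2 hu'lb
  set w : Z := c • v with hw
  have hwnorm : ‖w‖ = 1 := by
    rw [hw, norm_smul, hvu', hc, Real.norm_eq_abs, abs_of_pos (inv_pos.mpr hu'pos),
      inv_mul_cancel₀ (ne_of_gt hu'pos)]
  have hwsum : w = (l₁.map fun p => t (c • shiftOp N (truncOp N p.1)) p.2).sum := by
    rw [hw, hv, ← listSumMapSmul]
    congr 1
    refine List.map_congr_left fun p hp => ?_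
    exact (tp_smul t ht c _ p.2).symm
  -- Step 5: the combined representations of `u' ± w`.
  have hplus : u' + w = (l₁.map fun p =>
      t (truncOp N p.1 + c • shiftOp N (truncOp N p.1)) p.2).sum := by
    rw [hwsum, hu', ← listSumMapAdd]
    congr 1
    refine List.map_congr_left fun p hp => ?_
    exact (tp_add t ht _ _ p.2).symm
  have hminus : u' - w = (l₁.map fun p =>
      t (truncOp N p.1 - c • shiftOp N (truncOp N p.1)) p.2).sum := by
    rw [hwsum, hu', ← listSumMapSub]
    congr 1
    refine List.map_congr_left fun p hp => ?_
    exact (tp_sub t ht _ _ p.2).symm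
  -- Step 6: upper bounds.
  have hmaxle : max 1 |c| ≤ (1 - 2 * ε)⁻¹ := by
    refine max_le ?_ ?_
    · have h6 := inv_anti₀ hε2 (by linarith : 1 - 2 * ε ≤ 1)
      simpa using h6
    · rw [abs_of_pos hcpos]
      exact hcle
  have hMpos : (0 : ℝ) ≤ (1 - 2 * ε)⁻¹ := by positivity
  have hsum_bound : ∀ q : 𝔠₀ × X, q ∈ l₁ → ∀ d : ℝ, |d| = |c| →
      ‖truncOp N q.1 + d • shiftOp N (truncOp N q.1)‖ * ‖q.2‖
        ≤ ((1 - 2 * ε)⁻¹ * ‖q.1‖) * ‖q.2‖ := by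
    intro q hq d hd
    refine mul_le_mul_of_nonneg_right ?_ (norm_nonneg _)
    calc ‖truncOp N q.1 + d • shiftOp N (truncOp N q.1)‖ ≤ max 1 |d| * ‖q.1‖ :=
          key_czero_norm N q.1 d
      _ ≤ (1 - 2 * ε)⁻¹ * ‖q.1‖ := by
          rw [hd]
          exact mul_le_mul_of_nonneg_right hmaxle (norm_nonneg _)
  have hfactor : (l₁.map fun p => ((1 - 2 * ε)⁻¹ * ‖p.1‖) * ‖p.2‖).sum
      ≤ (1 - 2 * ε)⁻¹ * (1 + 2 * ε) := by
    have h7 : (l₁.map fun p => ((1 - 2 * ε)⁻¹ * ‖p.1‖) * ‖p.2‖).sum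
        = (1 - 2 * ε)⁻¹ * (l₁.map fun p => ‖p.1‖ * ‖p.2‖).sum := by
      simp only [mul_assoc]
      simpa [smul_eq_mul] using
        listSumMapSmul l₁ ((1 - 2 * ε)⁻¹) (fun p => ‖p.1‖ * ‖p.2‖)
    rw [h7]
    exact mul_le_mul_of_nonneg_left (le_of_lt hs₁) hMpos
  have hup : ‖u' + w‖ ≤ (1 - 2 * ε)⁻¹ * (1 + 2 * ε) := by
    rw [hplus]
    calc ‖(l₁.map fun p => t (truncOp N p.1 + c • shiftOp N (truncOp N p.1)) p.2).sum‖
        ≤ (l₁.map fun p =>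
            ‖truncOp N p.1 + c • shiftOp N (truncOp N p.1)‖ * ‖p.2‖).sum :=
          tp_norm_le' t ht _ l₁
      _ ≤ (l₁.map fun p => ((1 - 2 * ε)⁻¹ * ‖p.1‖) * ‖p.2‖).sum :=
          List.sum_le_sum fun p hp => hsum_bound p hp c rfl
      _ ≤ (1 - 2 * ε)⁻¹ * (1 + 2 * ε) := hfactor
  have hdown : ‖u' - w‖ ≤ (1 - 2 * ε)⁻¹ * (1 + 2 * ε) := by
    rw [hminus]
    have hsub : ∀ q : 𝔠₀ × X, truncOp N q.1 - c • shiftOp N (truncOp N q.1)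
        = truncOp N q.1 + (-c) • shiftOp N (truncOp N q.1) := by
      intro q
      ext k
      simp only [ZeroAtInftyContinuousMap.coe_sub, ZeroAtInftyContinuousMap.coe_add,
        ZeroAtInftyContinuousMap.coe_smul, Pi.sub_apply, Pi.add_apply, Pi.smul_apply,
        smul_eq_mul]
      ring
    calc ‖(l₁.map fun p => t (truncOp N p.1 - c • shiftOp N (truncOp N p.1)) p.2).sum‖
        ≤ (l₁.map fun p =>
            ‖truncOp N p.1 - c • shiftOp N (truncOp N p.1)‖ * ‖p.2‖).sum :=
          tp_norm_le' t ht _ l₁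
      _ ≤ (l₁.map fun p => ((1 - 2 * ε)⁻¹ * ‖p.1‖) * ‖p.2‖).sum := by
          refine List.sum_le_sum fun p hp => ?_
          rw [hsub p]
          exact hsum_bound p hp (-c) (abs_neg c)
      _ ≤ (1 - 2 * ε)⁻¹ * (1 + 2 * ε) := hfactor
  -- Step 7: lower bounds.
  have hlowp : ‖u'‖ ≤ ‖u' + w‖ := by
    rw [hplus]
    have h8 := tp_mono' t ht (truncOp N) (trunc_norm_le N)
      (fun p => truncOp N p.1 + c • shiftOp N (truncOp N p.1)) l₁
    simp only [trunc_add_smul_shift] at h8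
    rw [← hu'] at h8
    exact h8
  have hlowm : ‖u'‖ ≤ ‖u' - w‖ := by
    rw [hminus]
    have h8 := tp_mono' t ht (truncOp N) (trunc_norm_le N)
      (fun p => truncOp N p.1 - c • shiftOp N (truncOp N p.1)) l₁
    simp only [trunc_sub_smul_shift] at h8
    rw [← hu'] at h8
    exact h8
  -- Step 8: the conclusion.
  have hratio : (1 - 2 * ε)⁻¹ * (1 + 2 * ε) ≤ 1 + 8 * ε := by
    rw [← div_eq_inv_mul, div_le_iff₀ hε2]
    nlinarith
  refine ⟨w, hwnorm, ?_, ?_, ?_, ?_⟩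
  · have h9 : z + w = (z - u') + (u' + w) := by abel
    calc ‖z + w‖ = ‖(z - u') + (u' + w)‖ := by rw [h9]
      _ ≤ ‖z - u'‖ + ‖u' + w‖ := norm_add_le _ _
      _ ≤ 1 + 10 * ε := by linarith
  · have h9 : z - w = (z - u') + (u' - w) := by abel
    calc ‖z - w‖ = ‖(z - u') + (u' - w)‖ := by rw [h9]
      _ ≤ ‖z - u'‖ + ‖u' - w‖ := norm_add_le _ _
      _ ≤ 1 + 10 * ε := by linarith
  · have h9 : u' + w = (z + w) - (z - u') := by abel
    have h10 : ‖u' + w‖ ≤ ‖z + w‖ + ‖z - u'‖ := by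
      rw [h9]
      exact norm_sub_le _ _
    linarith
  · have h9 : u' - w = (z - w) - (z - u') := by abel
    have h10 : ‖u' - w‖ ≤ ‖z - w‖ + ‖z - u'‖ := by
      rw [h9]
      exact norm_sub_le _ _
    linarith

end TensorBasics

end LASQAux

theorem statement7 (X Z : Type*) [NormedAddCommGroup X] [NormedSpace ℝ X] [CompleteSpace X]
    [NormedAddCommGroup Z] [NormedSpace ℝ Z] [CompleteSpace Z]
    (t : ZeroAtInftyContinuousMap ℕ ℝ → X → Z)
    (ht : IsProjTensorProduct (ZeroAtInftyContinuousMap ℕ ℝ) X Z t) :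
    IsLASQ Z := by
  intro z hz
  have hstep : ∀ k : ℕ, ∃ w : Z, ‖w‖ = 1 ∧
      ‖z + w‖ ≤ 1 + 10 * (1 / (4 * ((k : ℝ) + 1))) ∧
      ‖z - w‖ ≤ 1 + 10 * (1 / (4 * ((k : ℝ) + 1))) ∧
      1 - 4 * (1 / (4 * ((k : ℝ) + 1))) ≤ ‖z + w‖ ∧
      1 - 4 * (1 / (4 * ((k : ℝ) + 1))) ≤ ‖z - w‖ := by
    intro k
    have hk0 : (0 : ℝ) < (k : ℝ) + 1 := by positivity
    refine tp_step t ht z hz (by positivity) ?_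
    rw [div_le_div_iff₀ (by positivity) (by norm_num)]
    nlinarith
  choose w hw1 hw2 hw3 hw4 hw5 using hstep
  have hδ : Tendsto (fun k : ℕ => 1 / (4 * ((k : ℝ) + 1))) atTop (nhds 0) := by
    have h1 := tendsto_one_div_add_atTop_nhds_zero_nat.const_mul (1 / 4 : ℝ)
    have h2 : (fun k : ℕ => (1 / 4 : ℝ) * (1 / ((k : ℝ) + 1)))
        = fun k : ℕ => 1 / (4 * ((k : ℝ) + 1)) := by
      funext k
      rw [div_mul_div_comm, one_mul]
    rw [h2] at h1
    simpa using h1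
  have hlow : Tendsto (fun k : ℕ => 1 - 4 * (1 / (4 * ((k : ℝ) + 1)))) atTop (nhds 1) := by
    have h1 := tendsto_const_nhds (x := (1 : ℝ)) (f := atTop (α := ℕ))
    have h2 := h1.sub (hδ.const_mul 4)
    simpa using h2
  have hhigh : Tendsto (fun k : ℕ => 1 + 10 * (1 / (4 * ((k : ℝ) + 1)))) atTop (nhds 1) := by
    have h1 := tendsto_const_nhds (x := (1 : ℝ)) (f := atTop (α := ℕ))
    have h2 := h1.add (hδ.const_mul 10)
    simpa using h2
  refine ⟨w, fun k => le_of_eq (hw1 k), ?_, ?_, ?_⟩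
  · have h3 : (fun k => ‖w k‖) = fun _ : ℕ => (1 : ℝ) := funext hw1
    rw [h3]
    exact tendsto_const_nhds
  · exact tendsto_of_tendsto_of_tendsto_of_le_of_le hlow hhigh (fun k => hw4 k)
      (fun k => hw2 k)
  · exact tendsto_of_tendsto_of_tendsto_of_le_of_le hlow hhigh (fun k => hw5 k)
      (fun k => hw3 k)
end
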